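/- arXiv:1909.01775 — 12 statements merged into one kernel-verified Lean document; each statement's English description precedes it below -/
import Mathlib

section
/- The outer independent double Roman domination number of the path P_n (n ≥ 1) equals n if n = 3, and n + 1 otherwise. -/
open SimpleGraph Finset

/-- Outer independent double Roman dominating function. -/
def IsOIDRDF {V : Type*} (G : SimpleGraph V) (f : V → ℕ) : Prop :=
  (∀ v, f v ≤ 3) ∧
  (∀ v, f v = 0 → (∃ u, G.Adj v u ∧ f u = 3) ∨
    (∃ u w, u ≠ w ∧ G.Adj v u ∧ G.Adj v w ∧ f u = 2 ∧ f w = 2)) ∧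
  (∀ v, f v = 1 → ∃ u, G.Adj v u ∧ 2 ≤ f u) ∧
  (∀ u v, G.Adj u v → f u = 0 → f v ≠ 0)

/-- Outer independent double Roman domination number. -/
noncomputable def oidRNum {V : Type*} (G : SimpleGraph V) [Fintype V] : ℕ :=
  sInf {w | ∃ f : V → ℕ, IsOIDRDF G f ∧ w = ∑ v, f v}

/-- Outer independent Roman dominating function. -/
def IsOIRDF {V : Type*} (G : SimpleGraph V) (f : V → ℕ) : Prop :=
  (∀ v, f v ≤ 2) ∧
  (∀ v, f v = 0 → ∃ u, G.Adj v u ∧ f u = 2) ∧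
  (∀ u v, G.Adj u v → f u = 0 → f v ≠ 0)

/-- Outer independent Roman domination number. -/
noncomputable def oiRNum {V : Type*} (G : SimpleGraph V) [Fintype V] : ℕ :=
  sInf {w | ∃ f : V → ℕ, IsOIRDF G f ∧ w = ∑ v, f v}

/-- Vertex cover number. -/
noncomputable def coverNum {V : Type*} (G : SimpleGraph V) [Fintype V] : ℕ :=
  sInf {k | ∃ S : Finset V, S.card = k ∧ ∀ u v, G.Adj u v → u ∈ S ∨ v ∈ S}

/-- Domination number. -/
noncomputable def domNum {V : Type*} (G : SimpleGraph V) [Fintype V] : ℕ :=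
  sInf {k | ∃ S : Finset V, S.card = k ∧ ∀ v, v ∉ S → ∃ u ∈ S, G.Adj v u}

/-- Independence number. -/
noncomputable def indNum {V : Type*} (G : SimpleGraph V) [Fintype V] : ℕ :=
  sSup {k | ∃ S : Finset V, S.card = k ∧ ∀ u ∈ S, ∀ v ∈ S, ¬ G.Adj u v}

/-- Maximum degree. -/
noncomputable def maxDeg {V : Type*} (G : SimpleGraph V) [Fintype V] : ℕ :=
  sSup (Set.range fun v => Nat.card {u | G.Adj v u})

/-- Underlying relation for the corona product. -/
def coronaRel {V W : Type*} (G : SimpleGraph V) (H : SimpleGraph W) :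
    (V ⊕ V × W) → (V ⊕ V × W) → Prop
  | Sum.inl u, Sum.inl v => G.Adj u v
  | Sum.inl u, Sum.inr p => u = p.1
  | Sum.inr p, Sum.inl u => u = p.1
  | Sum.inr p, Sum.inr q => p.1 = q.1 ∧ H.Adj p.2 q.2

/-- The corona product `G ⊙ H`. -/
def corona {V W : Type*} (G : SimpleGraph V) (H : SimpleGraph W) :
    SimpleGraph (V ⊕ V × W) :=
  SimpleGraph.fromRel (coronaRel G H)


lemma oidr_core (n : ℕ) (hn : 1 ≤ n) (F : ℕ → ℕ)
    (H0 : ∀ i, i < n → F i = 0 → (1 ≤ i ∧ F (i-1) = 3) ∨ (i+1 < n ∧ F (i+1) = 3) ∨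
       (1 ≤ i ∧ i+1 < n ∧ F (i-1) = 2 ∧ F (i+1) = 2))
    (H1 : ∀ i, i < n → F i = 1 → (1 ≤ i ∧ 2 ≤ F (i-1)) ∨ (i+1 < n ∧ 2 ≤ F (i+1)))
    (H2 : ∀ i, i+1 < n → F i = 0 → F (i+1) ≠ 0) :
    n ≤ ∑ i ∈ range n, F i ∧ (∑ i ∈ range n, F i ≤ n → n = 3) := by
  classical
  set g : ℕ → ℕ := fun i => if i < n then F i - 1 else 0 with hg
  set Z : Finset ℕ := (range n).filter (fun i => F i = 0) with hZ
  have hZmem : ∀ v, v ∈ Z ↔ v < n ∧ F v = 0 := by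
    intro v; simp [hZ, Finset.mem_filter, Finset.mem_range]
  have hgval : ∀ i, i < n → g i = F i - 1 := by
    intro i hi; show (if i < n then F i - 1 else 0) = F i - 1; exact if_pos hi
  have hgout : ∀ i, ¬ i < n → g i = 0 := by
    intro i hi; show (if i < n then F i - 1 else 0) = 0; exact if_neg hi
  have termA : ∀ v ∈ Z, 2 ≤ g (v-1) + g (v+1) := by
    intro v hv
    obtain ⟨hvn, hv0⟩ := (hZmem v).1 hv
    rcases H0 v hvn hv0 with ⟨h1, h3⟩ | ⟨h1, h3⟩ | ⟨h1, h2, ha, hb⟩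
    · have := hgval (v-1) (by omega); omega
    · have := hgval (v+1) h1; omega
    · have := hgval (v-1) (by omega); have := hgval (v+1) h2; omega
  have hsum2 : 2 * Z.card ≤ ∑ v ∈ Z, (g (v-1) + g (v+1)) := by
    have h := Finset.sum_le_sum termA
    rw [Finset.sum_const, smul_eq_mul] at h
    omega
  have hinj1 : ∀ x ∈ Z, ∀ y ∈ Z, x + 1 = y + 1 → x = y := by intros; omega
  have hinj2 : ∀ x ∈ Z, ∀ y ∈ Z, x - 1 = y - 1 → x = y := by
    intro x hx y hy hxy
    obtain ⟨hxn, hx0⟩ := (hZmem x).1 hx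
    obtain ⟨hyn, hy0⟩ := (hZmem y).1 hy
    by_contra hne
    have hcase : (x = 0 ∧ y = 1) ∨ (x = 1 ∧ y = 0) := by omega
    rcases hcase with ⟨hx', hy'⟩ | ⟨hx', hy'⟩
    · rw [hx'] at hx0; rw [hy'] at hy0; exact H2 0 (by omega) hx0 hy0
    · rw [hx'] at hx0; rw [hy'] at hy0; exact H2 0 (by omega) hy0 hx0
  have himgeq1 : ∑ u ∈ Z.image (· + 1), g u = ∑ v ∈ Z, g (v+1) := Finset.sum_image hinj1
  have himgeq2 : ∑ u ∈ Z.image (· - 1), g u = ∑ v ∈ Z, g (v-1) := Finset.sum_image hinj2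
  have hsub1 : Z.image (· + 1) ⊆ range (n+1) := by
    intro u hu
    simp only [Finset.mem_image] at hu
    obtain ⟨v, hv, rfl⟩ := hu
    have := ((hZmem v).1 hv).1
    simp only [Finset.mem_range]; omega
  have hsub2 : Z.image (· - 1) ⊆ range n := by
    intro u hu
    simp only [Finset.mem_image] at hu
    obtain ⟨v, hv, rfl⟩ := hu
    have := ((hZmem v).1 hv).1
    simp only [Finset.mem_range]; omega
  have hrangeS : ∑ i ∈ range (n+1), g i = ∑ i ∈ range n, g i := by
    rw [Finset.sum_range_succ, hgout n (lt_irrefl n), add_zero]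
  have himg1 : ∑ v ∈ Z, g (v+1) ≤ ∑ i ∈ range n, g i := by
    rw [← himgeq1, ← hrangeS]
    exact Finset.sum_le_sum_of_subset hsub1
  have himg2 : ∑ v ∈ Z, g (v-1) ≤ ∑ i ∈ range n, g i := by
    rw [← himgeq2]
    exact Finset.sum_le_sum_of_subset hsub2
  have hsplit : ∑ v ∈ Z, (g (v-1) + g (v+1)) = (∑ v ∈ Z, g (v-1)) + ∑ v ∈ Z, g (v+1) :=
    Finset.sum_add_distrib
  have hcard : Z.card ≤ n := by
    have := Finset.card_filter_le (range n) (fun i => F i = 0)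
    rw [Finset.card_range] at this
    rw [hZ]; exact this
  have hkey : Z.card ≤ ∑ i ∈ range n, g i := by omega
  have hFg : ∑ i ∈ range n, F i = (∑ i ∈ range n, g i) + (n - Z.card) := by
    have h1 : ∀ i ∈ range n, F i = g i + (if F i = 0 then 0 else 1) := by
      intro i hi
      have hi' := Finset.mem_range.1 hi
      have := hgval i hi'
      split_ifs <;> omega
    rw [Finset.sum_congr rfl h1, Finset.sum_add_distrib]
    congr 1
    have h2 : Z.card = ∑ i ∈ range n, (if F i = 0 then 1 else 0) := by
      rw [hZ, Finset.card_filter]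
    have h3 : (∑ i ∈ range n, (if F i = 0 then 0 else 1)) +
        ∑ i ∈ range n, (if F i = 0 then 1 else 0) = n := by
      rw [← Finset.sum_add_distrib]
      have h4 : ∀ i ∈ range n, ((if F i = 0 then 0 else 1) + if F i = 0 then 1 else 0) = 1 := by
        intro i _; split_ifs <;> rfl
      rw [Finset.sum_congr rfl h4, Finset.sum_const, Finset.card_range, smul_eq_mul, mul_one]
    omega
  constructor
  · omega
  · intro hs
    have hgZ : ∑ i ∈ range n, g i = Z.card := by omega
    have hS12 : (∑ v ∈ Z, g (v-1)) + (∑ v ∈ Z, g (v+1)) = 2 * Z.card := by omega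
    have hS1 : ∑ v ∈ Z, g (v-1) = ∑ i ∈ range n, g i := by omega
    have hS2 : ∑ v ∈ Z, g (v+1) = ∑ i ∈ range n, g i := by omega
    have hterm : ∀ v ∈ Z, g (v-1) + g (v+1) = 2 := by
      intro v hv
      by_contra hne
      have hlt : ∑ _v ∈ Z, 2 < ∑ v ∈ Z, (g (v-1) + g (v+1)) :=
        Finset.sum_lt_sum termA ⟨v, hv, lt_of_le_of_ne (termA v hv) (fun h => hne h.symm)⟩
      rw [Finset.sum_const, smul_eq_mul] at hlt
      omega
    have hout1 : ∀ u, u < n → g u ≠ 0 → ∃ v ∈ Z, v + 1 = u := by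
      intro u hu hgu
      by_contra hnot
      push_neg at hnot
      have hmem : u ∈ range (n+1) := by simp only [Finset.mem_range]; omega
      have hni : u ∉ Z.image (· + 1) := by
        simp only [Finset.mem_image]
        rintro ⟨v, hv, hvu⟩
        exact (hnot v hv) hvu
      have hsd := Finset.sum_sdiff (f := g) hsub1
      have h0 : ∑ u ∈ range (n+1) \ Z.image (· + 1), g u = 0 := by omega
      exact hgu (Finset.sum_eq_zero_iff.1 h0 u (Finset.mem_sdiff.2 ⟨hmem, hni⟩))
    have hout2 : ∀ u, u < n → g u ≠ 0 → ∃ v ∈ Z, v - 1 = u := by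
      intro u hu hgu
      by_contra hnot
      push_neg at hnot
      have hmem : u ∈ range n := Finset.mem_range.2 hu
      have hni : u ∉ Z.image (· - 1) := by
        simp only [Finset.mem_image]
        rintro ⟨v, hv, hvu⟩
        exact (hnot v hv) hvu
      have hsd := Finset.sum_sdiff (f := g) hsub2
      have h0 : ∑ u ∈ range n \ Z.image (· - 1), g u = 0 := by omega
      exact hgu (Finset.sum_eq_zero_iff.1 h0 u (Finset.mem_sdiff.2 ⟨hmem, hni⟩))
    have hleft : ∀ u, u < n → g u ≠ 0 → 1 ≤ u ∧ F (u-1) = 0 := by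
      intro u hu hgu
      obtain ⟨v, hv, hvu⟩ := hout1 u hu hgu
      obtain ⟨hvn, hv0⟩ := (hZmem v).1 hv
      refine ⟨by omega, ?_⟩
      have h' : u - 1 = v := by omega
      rw [h']; exact hv0
    have hright : ∀ u, u < n → g u ≠ 0 → u + 1 < n ∧ F (u+1) = 0 := by
      intro u hu hgu
      obtain ⟨v, hv, hvu⟩ := hout2 u hu hgu
      obtain ⟨hvn, hv0⟩ := (hZmem v).1 hv
      have hv1 : v = u + 1 := by
        rcases Nat.eq_zero_or_pos v with rfl | hpos
        · exfalso
          apply hgu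
          have hu0 : u = 0 := by omega
          rw [hu0, hgval 0 (by omega), hv0]
        · omega
      refine ⟨by omega, ?_⟩
      rw [show u + 1 = v from hv1.symm]; exact hv0
    have hg0 : g 0 = 0 := by
      by_contra h
      obtain ⟨h1, _⟩ := hleft 0 (by omega) h
      omega
    have hF0 : F 0 ≤ 1 := by
      have := hgval 0 (by omega); omega
    have hF0cases : F 0 = 0 ∨ F 0 = 1 := by omega
    rcases hF0cases with hF00 | hF01
    · rcases H0 0 (by omega) hF00 with ⟨h1, _⟩ | ⟨h1n, hF1⟩ | ⟨h1, _, _, _⟩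
      · omega
      · norm_num at h1n hF1
        have hg1 : g 1 ≠ 0 := by rw [hgval 1 h1n]; omega
        obtain ⟨h2n, hF2⟩ := hright 1 h1n hg1
        norm_num at h2n hF2
        by_contra hne3
        have h3n : 3 < n := by omega
        have h2Z : 2 ∈ Z := (hZmem 2).2 ⟨h2n, hF2⟩
        have ht2 := hterm 2 h2Z
        norm_num at ht2
        have hg1v : g 1 = 2 := by rw [hgval 1 h1n, hF1]
        have hg3 : g 3 = 0 := by omega
        have hF3le : F 3 ≤ 1 := by have := hgval 3 h3n; omega
        have hF3 : F 3 = 1 := by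
          have h23 := H2 2 h3n hF2; norm_num at h23; omega
        rcases H1 3 h3n hF3 with ⟨_, hge⟩ | ⟨h4n, hge⟩
        · norm_num at hge; omega
        · norm_num at h4n hge
          have hg4 : g 4 ≠ 0 := by rw [hgval 4 h4n]; omega
          obtain ⟨_, hF3''⟩ := hleft 4 h4n hg4
          norm_num at hF3''
          omega
      · omega
    · rcases H1 0 (by omega) hF01 with ⟨h1, _⟩ | ⟨h1n, hF1⟩
      · omega
      · norm_num at h1n hF1
        have hg1 : g 1 ≠ 0 := by rw [hgval 1 h1n]; omega
        obtain ⟨_, hF0'⟩ := hleft 1 h1n hg1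
        norm_num at hF0'
        omega

lemma oidr_transfer (n : ℕ) (f : Fin n → ℕ) (hf : IsOIDRDF (SimpleGraph.pathGraph n) f)
    (F : ℕ → ℕ) (hFv : ∀ u : Fin n, F u.val = f u) :
    (∀ i, i < n → F i = 0 → (1 ≤ i ∧ F (i-1) = 3) ∨ (i+1 < n ∧ F (i+1) = 3) ∨
       (1 ≤ i ∧ i+1 < n ∧ F (i-1) = 2 ∧ F (i+1) = 2)) ∧
    (∀ i, i < n → F i = 1 → (1 ≤ i ∧ 2 ≤ F (i-1)) ∨ (i+1 < n ∧ 2 ≤ F (i+1))) ∧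
    (∀ i, i+1 < n → F i = 0 → F (i+1) ≠ 0) := by
  refine ⟨?_, ?_, ?_⟩
  · intro i hi h0
    have hfi : f ⟨i, hi⟩ = 0 := by rw [← hFv ⟨i, hi⟩]; exact h0
    rcases hf.2.1 ⟨i, hi⟩ hfi with ⟨u, hadj, hu⟩ | ⟨u, w, huw, hau, haw, hu, hw⟩
    · have hh : i + 1 = u.val ∨ u.val + 1 = i := SimpleGraph.pathGraph_adj.mp hadj
      have hun := u.isLt
      rcases hh with h | h
      · exact Or.inr (Or.inl ⟨by omega, by rw [h, hFv]; exact hu⟩)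
      · exact Or.inl ⟨by omega, by rw [show i - 1 = u.val by omega, hFv]; exact hu⟩
    · have hu' : i + 1 = u.val ∨ u.val + 1 = i := SimpleGraph.pathGraph_adj.mp hau
      have hw' : i + 1 = w.val ∨ w.val + 1 = i := SimpleGraph.pathGraph_adj.mp haw
      have hneval : u.val ≠ w.val := fun h => huw (Fin.ext h)
      have hun := u.isLt
      have hwn := w.isLt
      rcases hu' with h1 | h1 <;> rcases hw' with h2 | h2
      · exact absurd (Fin.ext (show u.val = w.val by omega)) huw
      · refine Or.inr (Or.inr ⟨by omega, by omega, ?_, ?_⟩)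
        · rw [show i - 1 = w.val by omega, hFv]; exact hw
        · rw [h1, hFv]; exact hu
      · refine Or.inr (Or.inr ⟨by omega, by omega, ?_, ?_⟩)
        · rw [show i - 1 = u.val by omega, hFv]; exact hu
        · rw [h2, hFv]; exact hw
      · exact absurd (Fin.ext (show u.val = w.val by omega)) huw
  · intro i hi h1
    have hfi : f ⟨i, hi⟩ = 1 := by rw [← hFv ⟨i, hi⟩]; exact h1
    obtain ⟨u, hadj, hu⟩ := hf.2.2.1 ⟨i, hi⟩ hfi
    have hh : i + 1 = u.val ∨ u.val + 1 = i := SimpleGraph.pathGraph_adj.mp hadj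
    have hun := u.isLt
    rcases hh with h | h
    · exact Or.inr ⟨by omega, by rw [h, hFv]; exact hu⟩
    · exact Or.inl ⟨by omega, by rw [show i - 1 = u.val by omega, hFv]; exact hu⟩
  · intro i hi h0
    have hadj : (SimpleGraph.pathGraph n).Adj ⟨i, by omega⟩ ⟨i+1, hi⟩ :=
      SimpleGraph.pathGraph_adj.mpr (Or.inl rfl)
    have hne := hf.2.2.2 _ _ hadj (by rw [← hFv ⟨i, by omega⟩]; exact h0)
    intro hc
    apply hne
    rw [← hFv ⟨i+1, hi⟩]
    exact hc

lemma sum_if_even (n : ℕ) :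
    ∑ i ∈ range n, (if i % 2 = 0 then 2 else 0) = if n % 2 = 0 then n else n + 1 := by
  induction n with
  | zero => simp
  | succ n ih => rw [Finset.sum_range_succ, ih]; split_ifs <;> omega

lemma sum_if_odd (n : ℕ) :
    ∑ i ∈ range n, (if i % 2 = 1 then 2 else 0) = 2 * (n / 2) := by
  induction n with
  | zero => simp
  | succ n ih => rw [Finset.sum_range_succ, ih]; split_ifs <;> omega

lemma odd_construct (n : ℕ) (hodd : n % 2 = 1) :
    IsOIDRDF (SimpleGraph.pathGraph n) (fun i => if i.val % 2 = 0 then 2 else 0) ∧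
    ∑ i : Fin n, (if i.val % 2 = 0 then 2 else 0) = n + 1 := by
  constructor
  · refine ⟨fun v => by dsimp only; split_ifs <;> omega, ?_, ?_, ?_⟩
    · intro v hv
      dsimp only at hv
      have hv1 : v.val % 2 = 1 := by
        rcases Nat.mod_two_eq_zero_or_one v.val with h | h
        · rw [if_pos h] at hv; exact absurd hv (by norm_num)
        · exact h
      have hlt := v.isLt
      have hb2 : v.val + 1 < n := by omega
      right
      refine ⟨⟨v.val - 1, by omega⟩, ⟨v.val + 1, hb2⟩, ?_, ?_, ?_, ?_, ?_⟩
      · intro h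
        have := congrArg Fin.val h
        simp only at this
        omega
      · exact SimpleGraph.pathGraph_adj.mpr (Or.inr (show (v.val - 1) + 1 = v.val by omega))
      · exact SimpleGraph.pathGraph_adj.mpr (Or.inl rfl)
      · dsimp only; rw [if_pos (by omega : (v.val - 1) % 2 = 0)]
      · dsimp only; rw [if_pos (by omega : (v.val + 1) % 2 = 0)]
    · intro v hv
      dsimp only at hv
      split_ifs at hv <;> omega
    · intro u v hadj hu hv
      dsimp only at hu hv
      have h1 : u.val % 2 = 1 := by
        rcases Nat.mod_two_eq_zero_or_one u.val with h | h
        · rw [if_pos h] at hu; exact absurd hu (by norm_num)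
        · exact h
      have h2 : v.val % 2 = 1 := by
        rcases Nat.mod_two_eq_zero_or_one v.val with h | h
        · rw [if_pos h] at hv; exact absurd hv (by norm_num)
        · exact h
      rcases SimpleGraph.pathGraph_adj.mp hadj with h | h <;> omega
  · rw [Fin.sum_univ_eq_sum_range (fun i => if i % 2 = 0 then 2 else 0) n, sum_if_even,
      if_neg (by omega : ¬ n % 2 = 0)]

lemma even_construct (n : ℕ) (hn : 2 ≤ n) (heven : n % 2 = 0) :
    IsOIDRDF (SimpleGraph.pathGraph n)
      (fun i => (if i.val % 2 = 1 then 2 else 0) + (if i.val = 1 then 1 else 0)) ∧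
    ∑ i : Fin n, ((if i.val % 2 = 1 then 2 else 0) + (if i.val = 1 then 1 else 0)) = n + 1 := by
  constructor
  · refine ⟨fun v => by dsimp only; split_ifs <;> omega, ?_, ?_, ?_⟩
    · intro v hv
      dsimp only at hv
      have hv0 : v.val % 2 = 0 := by
        rcases Nat.mod_two_eq_zero_or_one v.val with h | h
        · exact h
        · rw [if_pos h] at hv; omega
      have hlt := v.isLt
      rcases Nat.lt_or_ge v.val 4 with hsm | hbig
      · -- v.val = 0 or 2
        have hv02 : v.val = 0 ∨ v.val = 2 := by omega
        left
        refine ⟨⟨1, by omega⟩, ?_, ?_⟩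
        · refine SimpleGraph.pathGraph_adj.mpr ?_
          rcases hv02 with h | h
          · exact Or.inl (show v.val + 1 = 1 by omega)
          · exact Or.inr (show 1 + 1 = v.val by omega)
        · norm_num
      · right
        have hb2 : v.val + 1 < n := by omega
        refine ⟨⟨v.val - 1, by omega⟩, ⟨v.val + 1, hb2⟩, ?_, ?_, ?_, ?_, ?_⟩
        · intro h
          have := congrArg Fin.val h
          simp only at this
          omega
        · exact SimpleGraph.pathGraph_adj.mpr (Or.inr (show (v.val - 1) + 1 = v.val by omega))
        · exact SimpleGraph.pathGraph_adj.mpr (Or.inl rfl)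
        · dsimp only
          rw [if_pos (by omega : (v.val - 1) % 2 = 1), if_neg (by omega : ¬ (v.val - 1) = 1)]
        · dsimp only
          rw [if_pos (by omega : (v.val + 1) % 2 = 1), if_neg (by omega : ¬ (v.val + 1) = 1)]
    · intro v hv
      dsimp only at hv
      split_ifs at hv <;> omega
    · intro u v hadj hu hv
      dsimp only at hu hv
      have h1 : u.val % 2 = 0 := by
        rcases Nat.mod_two_eq_zero_or_one u.val with h | h
        · exact h
        · rw [if_pos h] at hu; omega
      have h2 : v.val % 2 = 0 := by
        rcases Nat.mod_two_eq_zero_or_one v.val with h | h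
        · exact h
        · rw [if_pos h] at hv; omega
      rcases SimpleGraph.pathGraph_adj.mp hadj with h | h <;> omega
  · rw [Fin.sum_univ_eq_sum_range
      (fun i => (if i % 2 = 1 then 2 else 0) + (if i = 1 then 1 else 0)) n,
      Finset.sum_add_distrib, sum_if_odd]
    have h1 : ∑ i ∈ range n, (if i = 1 then (1:ℕ) else 0) = 1 := by
      rw [Finset.sum_ite_eq' (range n) 1 (fun _ => (1:ℕ)), if_pos (Finset.mem_range.2 (by omega))]
    rw [h1]
    omega

lemma three_construct :
    IsOIDRDF (SimpleGraph.pathGraph 3) ![0, 3, 0] ∧ ∑ i : Fin 3, ![0, 3, 0] i = 3 := by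
  constructor
  · refine ⟨?_, ?_, ?_, ?_⟩
    · intro v; fin_cases v <;> simp
    · intro v hv
      left
      refine ⟨1, ?_, rfl⟩
      fin_cases v
      · exact SimpleGraph.pathGraph_adj.mpr (Or.inl rfl)
      · simp at hv
      · exact SimpleGraph.pathGraph_adj.mpr (Or.inr rfl)
    · intro v hv; fin_cases v <;> simp_all
    · intro u v hadj hu hv
      fin_cases u <;> fin_cases v <;> simp_all [SimpleGraph.pathGraph_adj]
  · simp [Fin.sum_univ_three]

theorem stmt0 (n : ℕ) (hn : 1 ≤ n) :
    oidRNum (SimpleGraph.pathGraph n) = if n = 3 then n else n + 1 := by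
  have hlow : ∀ w ∈ {w | ∃ f : Fin n → ℕ, IsOIDRDF (SimpleGraph.pathGraph n) f ∧ w = ∑ v, f v},
      n ≤ w ∧ (w ≤ n → n = 3) := by
    rintro w ⟨f, hf, rfl⟩
    set F : ℕ → ℕ := fun i => if h : i < n then f ⟨i, h⟩ else 1 with hF
    have hFv : ∀ u : Fin n, F u.val = f u := by
      intro u
      show (if h : u.val < n then f ⟨u.val, h⟩ else 1) = f u
      rw [dif_pos u.isLt]
    obtain ⟨H0, H1, H2⟩ := oidr_transfer n f hf F hFv
    have hsum : ∑ v, f v = ∑ i ∈ Finset.range n, F i := by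
      rw [← Fin.sum_univ_eq_sum_range F n]
      exact Finset.sum_congr rfl (fun i _ => (hFv i).symm)
    rw [hsum]
    exact oidr_core n hn F H0 H1 H2
  unfold oidRNum
  by_cases h3 : n = 3
  · subst h3
    rw [if_pos rfl]
    have hmem : (3:ℕ) ∈
        {w | ∃ f : Fin 3 → ℕ, IsOIDRDF (SimpleGraph.pathGraph 3) f ∧ w = ∑ v, f v} :=
      ⟨![0,3,0], three_construct.1, three_construct.2.symm⟩
    refine le_antisymm (Nat.sInf_le hmem) (le_csInf ⟨3, hmem⟩ ?_)
    intro w hw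
    exact (hlow w hw).1
  · rw [if_neg h3]
    have hmem : (n+1) ∈
        {w | ∃ f : Fin n → ℕ, IsOIDRDF (SimpleGraph.pathGraph n) f ∧ w = ∑ v, f v} := by
      rcases Nat.mod_two_eq_zero_or_one n with he | ho
      · exact ⟨_, (even_construct n (by omega) he).1, (even_construct n (by omega) he).2.symm⟩
      · exact ⟨_, (odd_construct n ho).1, (odd_construct n ho).2.symm⟩
    refine le_antisymm (Nat.sInf_le hmem) (le_csInf ⟨_, hmem⟩ ?_)
    intro w hw
    have h1 := (hlow w hw).1
    have h2 := (hlow w hw).2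
    have hnle : ¬ w ≤ n := fun hw2 => h3 (h2 hw2)
    omega
end

section
/- The outer independent double Roman domination number of the cycle C_n (n ≥ 3) equals n if n is even, and n + 1 if n is odd. -/
open SimpleGraph Finset

/-!
At a vertex `v` with two distinct neighbours, an OIDRDF `f` has closed weight
`2 f(v) + Σ_{u ~ v} f(u) ≥ 4`: a `0` sees a `3` and another nonzero neighbour, or two `2`s; a `1`
sees a value `≥ 2`. Summing over a `d`-regular graph gives `4 |V| ≤ (d + 2) w(f)`, so
`w(f) ≥ n` on `C_n`. If every closed weight is exactly `4`, then `f` only takes the values `0`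
and `2`, and both the `0`s and the `2`s are independent: `f` is a proper 2-colouring, which an
odd cycle does not have. Putting `2` on the even-indexed vertices of `C_n` attains `n + n % 2`.
-/

namespace SimpleGraph

variable {V : Type*} [Fintype V] {G : SimpleGraph V} [DecidableRel G.Adj] {f : V → ℕ}

lemma add_le_sum_neighborFinset {v a b : V} (ha : G.Adj v a) (hb : G.Adj v b) (hab : a ≠ b) :
    f a + f b ≤ ∑ u ∈ G.neighborFinset v, f u := by
  classical
  rw [← Finset.sum_pair hab]
  exact Finset.sum_le_sum_of_subset (by simp [Finset.insert_subset_iff, ha, hb])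

lemma le_sum_neighborFinset {u v : V} (huv : G.Adj v u) :
    f u ≤ ∑ w ∈ G.neighborFinset v, f w :=
  Finset.single_le_sum (fun _ _ => Nat.zero_le _) ((mem_neighborFinset G v u).mpr huv)

lemma sum_sum_neighborFinset (f : V → ℕ) :
    ∑ v, ∑ u ∈ G.neighborFinset v, f u = ∑ u, G.degree u * f u := by
  rw [Finset.sum_comm' (t' := Finset.univ) (s' := fun u => G.neighborFinset u) (by simp [adj_comm])]
  simp [← card_neighborFinset_eq_degree]

lemma IsRegularOfDegree.sum_two_mul_add_sum_neighborFinset {d : ℕ} (hG : G.IsRegularOfDegree d)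
    (f : V → ℕ) : ∑ v, (2 * f v + ∑ u ∈ G.neighborFinset v, f u) = (d + 2) * ∑ v, f v := by
  simp only [Finset.sum_add_distrib, sum_sum_neighborFinset, hG.degree_eq, ← Finset.mul_sum]
  ring

lemma exists_adj_ne_of_two_le_degree {v : V} (hv : 2 ≤ G.degree v) (a : V) :
    ∃ b, G.Adj v b ∧ b ≠ a := by
  obtain ⟨b, hb, hba⟩ :=
    Finset.exists_mem_ne (hv.trans_eq (card_neighborFinset_eq_degree G v).symm) a
  exact ⟨b, (mem_neighborFinset G v b).mp hb, hba⟩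

lemma IsOIDRDF.four_le_two_mul_add_sum_neighborFinset (hf : IsOIDRDF G f) {v : V}
    (hv : 2 ≤ G.degree v) : 4 ≤ 2 * f v + ∑ u ∈ G.neighborFinset v, f u := by
  obtain ⟨-, hzero, hone, hindep⟩ := hf
  rcases Nat.lt_or_ge (f v) 2 with hlt | hge
  · interval_cases hfv : f v
    · rcases hzero v hfv with ⟨u, hu, hu3⟩ | ⟨u, w, huw, hu, hw, hu2, hw2⟩
      · obtain ⟨w, hw, hwu⟩ := exists_adj_ne_of_two_le_degree hv u
        have hw0 : f w ≠ 0 := hindep v w hw hfv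
        have := add_le_sum_neighborFinset (f := f) hu hw hwu.symm
        omega
      · have := add_le_sum_neighborFinset (f := f) hu hw huw
        omega
    · obtain ⟨u, hu, hu2⟩ := hone v hfv
      have := le_sum_neighborFinset (f := f) hu
      omega
  · omega

lemma IsOIDRDF.colorable_two_of_forall_le (hf : IsOIDRDF G f)
    (htight : ∀ v, 2 * f v + ∑ u ∈ G.neighborFinset v, f u ≤ 4) : G.Colorable 2 := by
  obtain ⟨-, -, hone, hindep⟩ := hf
  have hnbr_zero : ∀ {u v}, G.Adj u v → 2 ≤ f v → f u = 0 := fun {_ v} huv _ => by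
    have := le_sum_neighborFinset (f := f) huv.symm
    have := htight v
    omega
  have hne_one : ∀ v, f v ≠ 1 := fun v hv => by
    obtain ⟨u, hu, hu2⟩ := hone v hv
    have := hnbr_zero hu hu2
    omega
  refine (Coloring.mk (fun v => decide (f v = 0)) fun {u v} huv => ?_).colorable
  by_cases hu : f u = 0
  · simp [hu, hindep u v huv hu]
  · have hv : f v = 0 := hnbr_zero huv.symm (by have := hne_one u; omega)
    simp [hu, hv]

variable {d : ℕ}

lemma IsOIDRDF.four_mul_card_le (hf : IsOIDRDF G f) (hG : G.IsRegularOfDegree d) (hd : 2 ≤ d) :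
    4 * Fintype.card V ≤ (d + 2) * ∑ v, f v :=
  calc 4 * Fintype.card V = ∑ _v : V, 4 := by simp [mul_comm]
    _ ≤ ∑ v, (2 * f v + ∑ u ∈ G.neighborFinset v, f u) := Finset.sum_le_sum fun v _ =>
      hf.four_le_two_mul_add_sum_neighborFinset (hd.trans_eq (hG v).symm)
    _ = (d + 2) * ∑ v, f v := hG.sum_two_mul_add_sum_neighborFinset f

lemma IsOIDRDF.four_mul_card_lt (hf : IsOIDRDF G f) (hG : G.IsRegularOfDegree d) (hd : 2 ≤ d)
    (hG2 : ¬ G.Colorable 2) : 4 * Fintype.card V < (d + 2) * ∑ v, f v := by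
  obtain ⟨w, hw⟩ : ∃ w, 4 < 2 * f w + ∑ u ∈ G.neighborFinset w, f u := by
    by_contra! h
    exact hG2 (hf.colorable_two_of_forall_le h)
  calc 4 * Fintype.card V = ∑ _v : V, 4 := by simp [mul_comm]
    _ < ∑ v, (2 * f v + ∑ u ∈ G.neighborFinset v, f u) := Finset.sum_lt_sum
      (fun v _ => hf.four_le_two_mul_add_sum_neighborFinset (hd.trans_eq (hG v).symm))
      ⟨w, Finset.mem_univ w, hw⟩
    _ = (d + 2) * ∑ v, f v := hG.sum_two_mul_add_sum_neighborFinset f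

lemma cycleGraph_isRegularOfDegree_two (m : ℕ) : (cycleGraph (m + 3)).IsRegularOfDegree 2 :=
  fun _ => cycleGraph_degree_three_le

lemma cycleGraph_adj_iff {m : ℕ} {u v : Fin (m + 2)} :
    (cycleGraph (m + 2)).Adj u v ↔ v = u - 1 ∨ v = u + 1 := by
  rw [← mem_neighborSet, cycleGraph_neighborSet]
  rfl

lemma even_of_cycleGraph_colorable_two {m : ℕ} (h : (cycleGraph (m + 3)).Colorable 2) :
    Even (m + 3) :=
  cycleGraph.length_cycle (n := m) ▸ two_colorable_iff_forall_loop_even.mp h 0 (cycleGraph.cycle m)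

end SimpleGraph

def twoOnEven {n : ℕ} (v : Fin n) : ℕ := if Even (v : ℕ) then 2 else 0

lemma sum_twoOnEven (n : ℕ) : ∑ v : Fin n, twoOnEven v = n + n % 2 := by
  unfold twoOnEven
  rw [Fin.sum_univ_eq_sum_range (fun i => if Even i then 2 else 0) n]
  induction n with
  | zero => rfl
  | succ n ih =>
    rw [Finset.sum_range_succ, ih]
    split_ifs <;> grind

section Cycle

variable {m : ℕ}

lemma twoOnEven_add_one {v : Fin (m + 3)} (hv : twoOnEven v = 0) : twoOnEven (v + 1) = 2 := by
  unfold twoOnEven at *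
  rw [Fin.val_add_one]
  split_ifs at * <;> grind

lemma twoOnEven_sub_one {v : Fin (m + 3)} (hv : twoOnEven v = 0) : twoOnEven (v - 1) = 2 := by
  unfold twoOnEven at *
  rw [Fin.coe_sub_one]
  split_ifs at * <;> grind

lemma isOIDRDF_twoOnEven : IsOIDRDF (cycleGraph (m + 3)) twoOnEven := by
  have hvals : ∀ v : Fin (m + 3), twoOnEven v = 0 ∨ twoOnEven v = 2 := fun v => by
    unfold twoOnEven
    split_ifs <;> simp
  refine ⟨fun v => by rcases hvals v with h | h <;> omega, fun v hv => ?_,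
    fun v hv => by rcases hvals v with h | h <;> omega, fun u v huv hu hv => ?_⟩
  · have hne : v - 1 ≠ v + 1 := by
      simp only [ne_eq, sub_eq_iff_eq_add, add_assoc v, left_eq_add]
      exact ne_of_beq_false rfl
    exact Or.inr ⟨v - 1, v + 1, hne, cycleGraph_adj_iff.mpr (Or.inl rfl),
      cycleGraph_adj_iff.mpr (Or.inr rfl), twoOnEven_sub_one hv, twoOnEven_add_one hv⟩
  · rcases cycleGraph_adj_iff.mp huv with rfl | rfl
    · simp [twoOnEven_sub_one hu] at hv
    · simp [twoOnEven_add_one hu] at hv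

end Cycle

theorem stmt1 (n : ℕ) (hn : 3 ≤ n) :
    oidRNum (SimpleGraph.cycleGraph n) = if Even n then n else n + 1 := by
  obtain ⟨m, rfl⟩ := Nat.exists_eq_add_of_le' hn
  suffices IsLeast {w | ∃ f, IsOIDRDF (cycleGraph (m + 3)) f ∧ w = ∑ v, f v} (m + 3 + (m + 3) % 2) by
    rw [oidRNum, this.csInf_eq]
    split_ifs <;> grind
  refine ⟨⟨twoOnEven, isOIDRDF_twoOnEven, (sum_twoOnEven _).symm⟩, ?_⟩
  rintro _ ⟨f, hf, rfl⟩
  have hreg := cycleGraph_isRegularOfDegree_two m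
  by_cases heven : Even (m + 3)
  · have := hf.four_mul_card_le hreg le_rfl
    simp only [Fintype.card_fin] at this
    grind
  · have := hf.four_mul_card_lt hreg le_rfl (mt even_of_cycleGraph_colorable_two heven)
    simp only [Fintype.card_fin] at this
    grind
end

section
/- For the complete bipartite graph K_{m,n} with 1 ≤ m ≤ n, the outer independent double Roman domination number equals 3 if m = 1, equals 2m if m ∈ {2,3}, and equals m + 4 if m ≥ 4. -/
open SimpleGraph Finset

open Sum

lemma L2 {α : Type*} [Fintype α] [DecidableEq α] (f : α → ℕ) (h1 : ∀ v, 1 ≤ f v) (u : α) (hu : 2 ≤ f u) :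
    Fintype.card α + 1 ≤ ∑ v, f v := by
  have h3 : f u + ∑ x ∈ Finset.univ.erase u, f x = ∑ x, f x :=
    Finset.add_sum_erase _ f (Finset.mem_univ u)
  have h2 : (Finset.univ.erase u).card • 1 ≤ ∑ x ∈ Finset.univ.erase u, f x :=
    Finset.card_nsmul_le_sum _ _ _ (fun x _ => h1 x)
  have hc : (Finset.univ.erase u).card = Fintype.card α - 1 := by
    simp [Finset.card_erase_of_mem]
  have hk : 1 ≤ Fintype.card α := Fintype.card_pos_iff.mpr ⟨u⟩
  simp only [smul_eq_mul, mul_one, hc] at h2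
  omega

lemma L1 {α : Type*} [Fintype α] [DecidableEq α] (f : α → ℕ) (h1 : ∀ v, 1 ≤ f v)
    (h : (∃ i, f i = 3) ∨ ∃ i j, i ≠ j ∧ f i = 2 ∧ f j = 2) :
    Fintype.card α + 2 ≤ ∑ v, f v := by
  rcases h with ⟨i, hi⟩ | ⟨i, j, hij, hi, hj⟩
  · have h3 : f i + ∑ x ∈ Finset.univ.erase i, f x = ∑ x, f x :=
      Finset.add_sum_erase _ f (Finset.mem_univ i)
    have h2 : (Finset.univ.erase i).card • 1 ≤ ∑ x ∈ Finset.univ.erase i, f x :=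
      Finset.card_nsmul_le_sum _ _ _ (fun x _ => h1 x)
    have hc : (Finset.univ.erase i).card = Fintype.card α - 1 := by
      simp [Finset.card_erase_of_mem]
    have hk : 1 ≤ Fintype.card α := Fintype.card_pos_iff.mpr ⟨i⟩
    simp only [smul_eq_mul, mul_one, hc] at h2
    omega
  · have hji : j ∈ Finset.univ.erase i := by simp [Ne.symm hij]
    have h3 : f i + ∑ x ∈ Finset.univ.erase i, f x = ∑ x, f x :=
      Finset.add_sum_erase _ f (Finset.mem_univ i)
    have h4 : f j + ∑ x ∈ (Finset.univ.erase i).erase j, f x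
        = ∑ x ∈ Finset.univ.erase i, f x :=
      Finset.add_sum_erase _ f hji
    have h2 : ((Finset.univ.erase i).erase j).card • 1
        ≤ ∑ x ∈ (Finset.univ.erase i).erase j, f x :=
      Finset.card_nsmul_le_sum _ _ _ (fun x _ => h1 x)
    have hc : ((Finset.univ.erase i).erase j).card = Fintype.card α - 2 := by
      rw [Finset.card_erase_of_mem hji, Finset.card_erase_of_mem (Finset.mem_univ i)]
      simp only [Finset.card_univ]
      omega
    have hk : 2 ≤ Fintype.card α := Fintype.one_lt_card_iff.mpr ⟨i, j, hij⟩
    simp only [smul_eq_mul, mul_one, hc] at h2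
    omega


lemma lowerBound (m n : ℕ) (hm : 1 ≤ m) (hmn : m ≤ n)
    (f : Fin m ⊕ Fin n → ℕ)
    (hf : IsOIDRDF (completeBipartiteGraph (Fin m) (Fin n)) f) :
    (m + 2 ≤ ∑ v, f v) ∧ (m ≤ 3 → 2 * m ≤ ∑ v, f v) ∧ (4 ≤ m → m + 4 ≤ ∑ v, f v) := by
  obtain ⟨hle, h0, h1, hind⟩ := hf
  have hsum : ∑ v, f v = ∑ a, f (inl a) + ∑ b, f (inr b) := Fintype.sum_sum_type f
  have hAB : ∀ (a : Fin m) (b : Fin n),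
      (completeBipartiteGraph (Fin m) (Fin n)).Adj (inl a) (inr b) := by simp
  have hBA : ∀ (b : Fin n) (a : Fin m),
      (completeBipartiteGraph (Fin m) (Fin n)).Adj (inr b) (inl a) := by simp
  have hadj_inr : ∀ (b : Fin n) u,
      (completeBipartiteGraph (Fin m) (Fin n)).Adj (inr b) u → ∃ a, u = inl a := by
    rintro b (a | b') h
    · exact ⟨a, rfl⟩
    · simp at h
  have hadj_inl : ∀ (a : Fin m) u,
      (completeBipartiteGraph (Fin m) (Fin n)).Adj (inl a) u → ∃ b, u = inr b := by
    rintro a (a' | b) h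
    · simp at h
    · exact ⟨b, rfl⟩
  by_cases hB0 : ∃ b, f (inr b) = 0
  · obtain ⟨b, hb⟩ := hB0
    have hA1 : ∀ a, 1 ≤ f (inl a) := fun a =>
      Nat.one_le_iff_ne_zero.mpr (hind (inr b) (inl a) (hBA b a) hb)
    have hSA : m + 2 ≤ ∑ a, f (inl a) := by
      have := L1 (fun a => f (inl a)) hA1 ?_
      · simpa using this
      rcases h0 (inr b) hb with ⟨u, hadj, hu⟩ | ⟨u, w, huw, hadju, hadjw, hu, hw⟩
      · obtain ⟨a, rfl⟩ := hadj_inr b u hadj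
        exact Or.inl ⟨a, hu⟩
      · obtain ⟨a1, rfl⟩ := hadj_inr b u hadju
        obtain ⟨a2, rfl⟩ := hadj_inr b w hadjw
        exact Or.inr ⟨a1, a2, fun h => huw (by rw [h]), hu, hw⟩
    by_cases hA1' : ∃ a, f (inl a) = 1
    · obtain ⟨a, ha⟩ := hA1'
      obtain ⟨u, hadj, hu⟩ := h1 (inl a) ha
      obtain ⟨b', rfl⟩ := hadj_inl a u hadj
      have hSB : 2 ≤ ∑ b, f (inr b) :=
        le_trans hu (Finset.single_le_sum (f := fun b => f (inr b)) (fun x _ => Nat.zero_le _) (Finset.mem_univ b'))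
      omega
    · push_neg at hA1'
      have hA2 : ∀ a, 2 ≤ f (inl a) := fun a => by
        have := hA1 a; have := hA1' a; omega
      have hSA2 : 2 * m ≤ ∑ a, f (inl a) := by
        have := Finset.card_nsmul_le_sum Finset.univ (fun a => f (inl a)) 2
          (fun a _ => hA2 a)
        simpa [mul_comm] using this
      omega
  · push_neg at hB0
    have hB1 : ∀ b, 1 ≤ f (inr b) := fun b => Nat.one_le_iff_ne_zero.mpr (hB0 b)
    by_cases hA0 : ∃ a, f (inl a) = 0
    · obtain ⟨a, ha⟩ := hA0
      have hSB : n + 2 ≤ ∑ b, f (inr b) := by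
        have := L1 (fun b => f (inr b)) hB1 ?_
        · simpa using this
        rcases h0 (inl a) ha with ⟨u, hadj, hu⟩ | ⟨u, w, huw, hadju, hadjw, hu, hw⟩
        · obtain ⟨b1, rfl⟩ := hadj_inl a u hadj
          exact Or.inl ⟨b1, hu⟩
        · obtain ⟨b1, rfl⟩ := hadj_inl a u hadju
          obtain ⟨b2, rfl⟩ := hadj_inl a w hadjw
          exact Or.inr ⟨b1, b2, fun h => huw (by rw [h]), hu, hw⟩
      by_cases hB1' : ∃ b, f (inr b) = 1
      · obtain ⟨b, hb⟩ := hB1'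
        obtain ⟨u, hadj, hu⟩ := h1 (inr b) hb
        obtain ⟨a', rfl⟩ := hadj_inr b u hadj
        have hSA : 2 ≤ ∑ a, f (inl a) :=
          le_trans hu (Finset.single_le_sum (f := fun a => f (inl a)) (fun x _ => Nat.zero_le _) (Finset.mem_univ a'))
        omega
      · push_neg at hB1'
        have hB2 : ∀ b, 2 ≤ f (inr b) := fun b => by
          have := hB1 b; have := hB1' b; omega
        have hSB2 : 2 * n ≤ ∑ b, f (inr b) := by
          have := Finset.card_nsmul_le_sum Finset.univ (fun b => f (inr b)) 2
            (fun b _ => hB2 b)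
          simpa [mul_comm] using this
        omega
    · push_neg at hA0
      have hall : ∀ v, 1 ≤ f v := by
        rintro (a | b)
        · exact Nat.one_le_iff_ne_zero.mpr (hA0 a)
        · exact hB1 b
      by_cases hv1 : ∃ v, f v = 1
      · obtain ⟨v, hv⟩ := hv1
        obtain ⟨u, hadj, hu⟩ := h1 v hv
        have := L2 f hall u hu
        simp only [Fintype.card_sum, Fintype.card_fin] at this
        omega
      · push_neg at hv1
        have hall2 : ∀ v, 2 ≤ f v := fun v => by
          have := hall v; have := hv1 v; omega
        have := Finset.card_nsmul_le_sum Finset.univ f 2 (fun v _ => hall2 v)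
        simp only [smul_eq_mul, Finset.card_univ, Fintype.card_sum, Fintype.card_fin] at this
        have he : ∑ v, f v = Finset.univ.sum f := rfl
        omega

lemma upper1 (n : ℕ) :
    IsOIDRDF (completeBipartiteGraph (Fin 1) (Fin n)) (Sum.elim (fun _ => 3) (fun _ => 0)) ∧
    ∑ v, (Sum.elim (fun _ => 3) (fun _ => 0) : Fin 1 ⊕ Fin n → ℕ) v = 3 := by
  constructor
  · refine ⟨?_, ?_, ?_, ?_⟩
    · rintro (a | b) <;> simp
    · rintro (a | b) hv
      · simp at hv
      · exact Or.inl ⟨inl 0, by simp⟩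
    · rintro (a | b) hv <;> simp at hv
    · rintro (a | b) (a' | b') hadj h0 <;> simp_all
  · rw [Fintype.sum_sum_type]; simp

lemma upper2 (m n : ℕ) (hm : 2 ≤ m) (hn : 1 ≤ n) :
    IsOIDRDF (completeBipartiteGraph (Fin m) (Fin n)) (Sum.elim (fun _ => 2) (fun _ => 0)) ∧
    ∑ v, (Sum.elim (fun _ => 2) (fun _ => 0) : Fin m ⊕ Fin n → ℕ) v = 2 * m := by
  constructor
  · refine ⟨?_, ?_, ?_, ?_⟩
    · rintro (a | b) <;> simp
    · rintro (a | b) hv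
      · simp at hv
      · refine Or.inr ⟨inl ⟨0, by omega⟩, inl ⟨1, by omega⟩, ?_, by simp, by simp, rfl, rfl⟩
        simp [Fin.ext_iff]
    · rintro (a | b) hv <;> simp at hv
    · rintro (a | b) (a' | b') hadj h0 <;> simp_all
  · rw [Fintype.sum_sum_type]; simp [mul_comm]

lemma upper3 (m n : ℕ) (hm : 1 ≤ m) (hn : 1 ≤ n) :
    haveI : NeZero m := ⟨by omega⟩
    haveI : NeZero n := ⟨by omega⟩
    IsOIDRDF (completeBipartiteGraph (Fin m) (Fin n))
      (Sum.elim (fun a => if a = 0 then 3 else 1) (fun b => if b = 0 then 2 else 0)) ∧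
    ∑ v, (Sum.elim (fun a => if a = 0 then 3 else 1) (fun b => if b = 0 then 2 else 0) :
      Fin m ⊕ Fin n → ℕ) v = m + 4 := by
  haveI : NeZero m := ⟨by omega⟩
  haveI : NeZero n := ⟨by omega⟩
  constructor
  · refine ⟨?_, ?_, ?_, ?_⟩
    · rintro (a | b) <;> simp <;> split <;> omega
    · rintro (a | b) hv
      · simp at hv; split at hv <;> omega
      · exact Or.inl ⟨inl 0, by simp⟩
    · rintro (a | b) hv
      · exact ⟨inr 0, by simp⟩
      · simp at hv; split at hv <;> omega
    · rintro (a | b) (a' | b') hadj h0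
      · simp at hadj
      · exfalso; simp only [Sum.elim_inl] at h0; split at h0 <;> omega
      · simp only [Sum.elim_inl]; split <;> omega
      · simp at hadj
  · rw [Fintype.sum_sum_type]
    have h1 : ∑ a : Fin m, (if a = 0 then 3 else 1) = m + 2 := by
      have : ∀ a : Fin m, (if a = 0 then 3 else 1) = (if a = 0 then 2 else 0) + 1 := by
        intro a; split <;> rfl
      simp only [this, Finset.sum_add_distrib, Finset.sum_ite_eq', Finset.mem_univ,
        if_true, Finset.sum_const, Finset.card_univ, Fintype.card_fin, smul_eq_mul, mul_one]
      omega
    have h2 : ∑ b : Fin n, (if b = 0 then 2 else 0) = 2 := by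
      simp [Finset.sum_ite_eq']
    simp only [Sum.elim_inl, Sum.elim_inr, h1, h2]

theorem stmt3 (m n : ℕ) (hm : 1 ≤ m) (hmn : m ≤ n) :
    oidRNum (completeBipartiteGraph (Fin m) (Fin n)) =
      if m = 1 then 3 else if m ≤ 3 then 2 * m else m + 4 := by
  have hn : 1 ≤ n := le_trans hm hmn
  rw [oidRNum]
  by_cases hm1 : m = 1
  · subst hm1
    rw [if_pos rfl]
    obtain ⟨hdf, hsum⟩ := upper1 n
    have hmem : 3 ∈ {w | ∃ f : Fin 1 ⊕ Fin n → ℕ,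
        IsOIDRDF (completeBipartiteGraph (Fin 1) (Fin n)) f ∧ w = ∑ v, f v} :=
      ⟨_, hdf, hsum.symm⟩
    refine le_antisymm (Nat.sInf_le hmem) ?_
    obtain ⟨f0, hf0, hs⟩ := Nat.sInf_mem (⟨3, hmem⟩ : Set.Nonempty _)
    have hl := lowerBound 1 n le_rfl hmn f0 hf0
    rw [hs]
    exact hl.1
  · by_cases hm3 : m ≤ 3
    · rw [if_neg hm1, if_pos hm3]
      obtain ⟨hdf, hsum⟩ := upper2 m n (by omega) hn
      have hmem : 2 * m ∈ {w | ∃ f : Fin m ⊕ Fin n → ℕ,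
          IsOIDRDF (completeBipartiteGraph (Fin m) (Fin n)) f ∧ w = ∑ v, f v} :=
        ⟨_, hdf, hsum.symm⟩
      refine le_antisymm (Nat.sInf_le hmem) ?_
      obtain ⟨f0, hf0, hs⟩ := Nat.sInf_mem (⟨2 * m, hmem⟩ : Set.Nonempty _)
      have hl := lowerBound m n hm hmn f0 hf0
      rw [hs]
      exact hl.2.1 hm3
    · rw [if_neg hm1, if_neg hm3]
      obtain ⟨hdf, hsum⟩ := upper3 m n hm hn
      have hmem : m + 4 ∈ {w | ∃ f : Fin m ⊕ Fin n → ℕ,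
          IsOIDRDF (completeBipartiteGraph (Fin m) (Fin n)) f ∧ w = ∑ v, f v} :=
        ⟨_, hdf, hsum.symm⟩
      refine le_antisymm (Nat.sInf_le hmem) ?_
      obtain ⟨f0, hf0, hs⟩ := Nat.sInf_mem (⟨m + 4, hmem⟩ : Set.Nonempty _)
      have hl := lowerBound m n hm hmn f0 hf0
      rw [hs]
      exact hl.2.2 (Nat.not_le.mp hm3)
end

section
/- For a complete k-partite graph K_{n_1,...,n_k} with k ≥ 3 and 1 ≤ n_1 ≤ n_2 ≤ ... ≤ n_k, the outer independent double Roman domination number equals n_1 + n_2 + ... + n_{k-1} + 2. -/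
open SimpleGraph Finset

/-! A vertex `z` of weight `0` forces weight at least `1` on each of its neighbours (outer
independence) and `2` more among them (double Roman condition), so every OIDRDF weighs at least
`δ(G) + 2`; without zeros the weight is at least `|V| + 1 > δ(G) + 1`. In `K_{n_1,…,n_k}` the
minimum degree is `n_1 + ⋯ + n_{k-1}`, attained on the largest part. Conversely, weight `0` on the
largest part, `2` on one vertex in each of two other parts and `1` elsewhere is an OIDRDF. -/

lemma Finset.card_add_sum_tsub_one_le_sum {α : Type*} {s t : Finset α} {f : α → ℕ}
    (hts : t ⊆ s) (hf : ∀ v ∈ s, 1 ≤ f v) :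
    #s + ∑ v ∈ t, (f v - 1) ≤ ∑ v ∈ s, f v := by
  calc #s + ∑ v ∈ t, (f v - 1)
      ≤ ∑ v ∈ s, 1 + ∑ v ∈ s, (f v - 1) := by
        rw [card_eq_sum_ones]
        exact Nat.add_le_add_left (sum_le_sum_of_subset hts) _
    _ = ∑ v ∈ s, f v := by
        rw [← sum_add_distrib]
        exact sum_congr rfl fun v hv => by have := hf v hv; omega

lemma Finset.sum_erase_le_sum_erase {ι M : Type*} [DecidableEq ι] [AddCommMonoid M]
    [PartialOrder M] [IsOrderedCancelAddMonoid M] {s : Finset ι} {f : ι → M} {i j : ι}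
    (hi : i ∈ s) (hj : j ∈ s) (hij : f j ≤ f i) :
    ∑ x ∈ s.erase i, f x ≤ ∑ x ∈ s.erase j, f x := by
  refine le_of_add_le_add_right (a := f j) ?_
  calc ∑ x ∈ s.erase i, f x + f j ≤ ∑ x ∈ s.erase i, f x + f i := by gcongr
    _ = ∑ x ∈ s.erase j, f x + f j := by rw [sum_erase_add _ _ hi, sum_erase_add _ _ hj]

namespace IsOIDRDF

variable {V : Type*} {G : SimpleGraph V} {f : V → ℕ}

lemma one_le_of_adj_of_eq_zero (hf : IsOIDRDF G f) {z v : V} (hz : f z = 0) (hzv : G.Adj z v) :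
    1 ≤ f v :=
  Nat.one_le_iff_ne_zero.mpr (hf.2.2.2 z v hzv hz)

variable [Fintype V] [DecidableRel G.Adj]

lemma degree_add_two_le_sum (hf : IsOIDRDF G f) {z : V} (hz : f z = 0) :
    G.degree z + 2 ≤ ∑ v, f v := by
  classical
  have hN : ∀ v ∈ G.neighborFinset z, 1 ≤ f v := fun v hv =>
    hf.one_le_of_adj_of_eq_zero hz ((mem_neighborFinset G z v).mp hv)
  obtain ⟨t, ht, htwo⟩ : ∃ t ⊆ G.neighborFinset z, 2 ≤ ∑ v ∈ t, (f v - 1) := by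
    rcases hf.2.1 z hz with ⟨u, hu, hu3⟩ | ⟨u, w, huw, hu, hw, hu2, hw2⟩
    · exact ⟨{u}, by simpa using hu, by simp [hu3]⟩
    · exact ⟨{u, w}, by simp [insert_subset_iff, hu, hw], by simp [huw, hu2, hw2]⟩
  calc G.degree z + 2 ≤ #(G.neighborFinset z) + ∑ v ∈ t, (f v - 1) := by
        rw [card_neighborFinset_eq_degree]; omega
    _ ≤ ∑ v ∈ G.neighborFinset z, f v := card_add_sum_tsub_one_le_sum ht hN
    _ ≤ ∑ v, f v := sum_le_sum_of_subset (subset_univ _)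

omit [DecidableRel G.Adj] in
lemma card_add_one_le_sum [Nonempty V] (hf : IsOIDRDF G f) (hpos : ∀ v, f v ≠ 0) :
    Fintype.card V + 1 ≤ ∑ v, f v := by
  classical
  obtain ⟨u, hu⟩ : ∃ u, 2 ≤ f u := by
    obtain ⟨v⟩ := ‹Nonempty V›
    by_cases hv : f v = 1
    · obtain ⟨u, -, hu⟩ := hf.2.2.1 v hv
      exact ⟨u, hu⟩
    · exact ⟨v, by have := hpos v; omega⟩
  calc Fintype.card V + 1 ≤ #univ + ∑ v ∈ {u}, (f v - 1) := by simp; omega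
    _ ≤ ∑ v, f v :=
      card_add_sum_tsub_one_le_sum (subset_univ _) fun v _ => Nat.one_le_iff_ne_zero.mpr (hpos v)

lemma minDegree_add_two_le_sum [Nonempty V] (hf : IsOIDRDF G f) :
    G.minDegree + 2 ≤ ∑ v, f v := by
  by_cases hz : ∃ z, f z = 0
  · obtain ⟨z, hz⟩ := hz
    exact (Nat.add_le_add_right (G.minDegree_le_degree z) 2).trans (hf.degree_add_two_le_sum hz)
  · push Not at hz
    have hδ : G.minDegree < Fintype.card V :=
      (G.minDegree_le_degree (Classical.arbitrary V)).trans_lt (G.degree_lt_card_verts _)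
    have := hf.card_add_one_le_sum hz
    omega

end IsOIDRDF

namespace completeMultipartiteGraph

variable {ι : Type*} [DecidableEq ι] {V : ι → Type*}

lemma degree_eq [Fintype ι] [∀ i, Fintype (V i)] [DecidableRel (completeMultipartiteGraph V).Adj]
    (v : Σ i, V i) :
    (completeMultipartiteGraph V).degree v = ∑ i ∈ univ.erase v.1, Fintype.card (V i) := by
  have : (completeMultipartiteGraph V).neighborFinset v = (univ.erase v.1).sigma fun _ => univ := by
    ext w
    simp [ne_comm]
  rw [← card_neighborFinset_eq_degree, this, card_sigma]
  simp

variable [DecidableEq (Σ i, V i)]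

def twoHubWeight (L : ι) (a b : Σ i, V i) (v : Σ i, V i) : ℕ :=
  (if v.1 = L then 0 else 1) + (if v = a then 1 else 0) + (if v = b then 1 else 0)

lemma isOIDRDF_twoHubWeight {L : ι} {a b : Σ i, V i} (ha : a.1 ≠ L) (hb : b.1 ≠ L)
    (hab : a.1 ≠ b.1) : IsOIDRDF (completeMultipartiteGraph V) (twoHubWeight L a b) := by
  have hab' : a ≠ b := fun h => hab (congrArg Sigma.fst h)
  have ha2 : twoHubWeight L a b a = 2 := by simp [twoHubWeight, ha, hab']
  have hb2 : twoHubWeight L a b b = 2 := by simp [twoHubWeight, hb, hab'.symm]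
  have hzero : ∀ v, twoHubWeight L a b v = 0 → v.1 = L := by
    intro v hv
    by_contra hne
    simp [twoHubWeight, hne] at hv
  refine ⟨fun v => ?_, fun v hv => ?_, fun v _ => ?_, fun u v huv hu hv => ?_⟩
  · unfold twoHubWeight
    split_ifs <;> omega
  · refine Or.inr ⟨a, b, hab', ?_, ?_, ha2, hb2⟩ <;> simp [hzero v hv, ha.symm, hb.symm]
  · by_cases hva : v.1 = a.1
    · exact ⟨b, by simp [hva, hab], hb2.ge⟩
    · exact ⟨a, by simpa using hva, ha2.ge⟩
  · exact huv ((hzero u hu).trans (hzero v hv).symm)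

lemma sum_twoHubWeight [Fintype ι] [∀ i, Fintype (V i)] (L : ι) (a b : Σ i, V i) :
    ∑ v, twoHubWeight L a b v = ∑ i ∈ univ.erase L, Fintype.card (V i) + 2 := by
  have hparts : ∑ v : Σ i, V i, (if v.1 = L then 0 else 1) =
      ∑ i ∈ univ.erase L, Fintype.card (V i) := by
    rw [← univ_sigma_univ, sum_sigma, ← add_sum_erase _ _ (mem_univ L)]
    simp only [if_true, sum_const_zero, zero_add]
    exact sum_congr rfl fun i hi => by simp [ne_of_mem_erase hi]
  simp only [twoHubWeight, sum_add_distrib, hparts, sum_ite_eq', mem_univ, if_true]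

end completeMultipartiteGraph

theorem stmt4 (k : ℕ) (hk : 3 ≤ k) (n : Fin k → ℕ) (hpos : ∀ i, 1 ≤ n i)
    (hmono : Monotone n) :
    oidRNum (completeMultipartiteGraph (fun i : Fin k => Fin (n i))) =
      (∑ i ∈ Finset.univ.erase ⟨k - 1, by omega⟩, n i) + 2 := by
  classical
  set L : Fin k := ⟨k - 1, by omega⟩
  let a : Σ i : Fin k, Fin (n i) := ⟨⟨0, by omega⟩, ⟨0, hpos _⟩⟩
  let b : Σ i : Fin k, Fin (n i) := ⟨⟨1, by omega⟩, ⟨0, hpos _⟩⟩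
  have ha : a.1 ≠ L := by simp [a, L, Fin.ext_iff]; omega
  have hb : b.1 ≠ L := by simp [b, L, Fin.ext_iff]; omega
  have hab : a.1 ≠ b.1 := by simp [a, b]
  have : Nonempty (Σ i : Fin k, Fin (n i)) := ⟨a⟩
  refine IsLeast.csInf_eq
    ⟨⟨_, completeMultipartiteGraph.isOIDRDF_twoHubWeight ha hb hab, ?_⟩, ?_⟩
  · simp [completeMultipartiteGraph.sum_twoHubWeight, L]
  rintro _ ⟨f, hf, rfl⟩
  refine le_trans (Nat.add_le_add_right ?_ 2) hf.minDegree_add_two_le_sum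
  refine le_minDegree_of_forall_le_degree _ _ fun v => ?_
  rw [completeMultipartiteGraph.degree_eq]
  simpa using sum_erase_le_sum_erase (mem_univ L) (mem_univ v.1)
    (hmono (show v.1 ≤ L from Fin.mk_le_mk.mpr (by omega)))
end

section
/- A connected graph G of order n ≥ 3 satisfies γ_oidR(G) = 3 if and only if G is a star K_{1,n-1}. -/
open SimpleGraph Finset

/-! A vertex of value `0` forces weight at least `3` (a neighbour of value `3` or two of value
`2`), and a zero-free OIDRDF weighs more than `n`, since a vertex of value `1` needs a neighbour
of value at least `2`; hence `γ_oidR ≥ 3` once `n ≥ 3`. A weight-`3` OIDRDF therefore has a zero,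
hence a vertex `c` of value `3` and value `0` everywhere else. Such a function is an OIDRDF
exactly on the star centred at `c`: every other vertex must see `c`, and no two of them may be
adjacent. -/

namespace SimpleGraph

variable {V W : Type*}

theorem comap_completeBipartiteGraph_fin_one (e : V ≃ Fin 1 ⊕ W) :
    (completeBipartiteGraph (Fin 1) W).comap e = starGraph (e.symm (.inl 0)) := by
  have hleft : ∀ v, (e v).isLeft ↔ v = e.symm (.inl 0) := by
    intro v
    rw [Equiv.eq_symm_apply]
    cases e v <;> simp [Fin.fin_one_eq_zero]
  ext u v
  simp only [comap_adj, completeBipartiteGraph_adj, starGraph_adj, ← Sum.not_isLeft, hleft]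
  grind

theorem nonempty_iso_completeBipartiteGraph_fin_one_iff [Fintype V] {m : ℕ}
    (G : SimpleGraph V) (hV : Fintype.card V = m + 1) :
    Nonempty (G ≃g completeBipartiteGraph (Fin 1) (Fin m)) ↔ ∃ c, G = starGraph c := by
  constructor
  · rintro ⟨e⟩
    refine ⟨_, .trans ?_ (comap_completeBipartiteGraph_fin_one e.toEquiv)⟩
    ext u v
    exact e.map_adj_iff.symm
  · rintro ⟨c, rfl⟩
    let e₀ : V ≃ Fin 1 ⊕ Fin m := Fintype.equivOfCardEq (by simp [hV, add_comm])
    let e := e₀.trans (Equiv.swap (e₀ c) (.inl 0))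
    have hc : e.symm (.inl 0) = c := by simp [e]
    rw [← hc, ← comap_completeBipartiteGraph_fin_one]
    exact ⟨Iso.comap e _⟩

end SimpleGraph

section OIDRDF

variable {V : Type*} {G : SimpleGraph V} {f : V → ℕ}

theorem isOIDRDF_const_three (G : SimpleGraph V) : IsOIDRDF G fun _ => 3 := by
  refine ⟨fun _ => le_rfl, ?_, ?_, ?_⟩ <;> simp

theorem oidRNum_le [Fintype V] (hf : IsOIDRDF G f) : oidRNum G ≤ ∑ v, f v :=
  Nat.sInf_le ⟨f, hf, rfl⟩

theorem exists_isOIDRDF_sum_eq_oidRNum [Fintype V] (G : SimpleGraph V) :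
    ∃ f, IsOIDRDF G f ∧ ∑ v, f v = oidRNum G := by
  obtain ⟨f, hf, hsum⟩ := Nat.sInf_mem (s := {w | ∃ f, IsOIDRDF G f ∧ w = ∑ v, f v})
    ⟨_, _, isOIDRDF_const_three G, rfl⟩
  exact ⟨f, hf, hsum.symm⟩

theorem add_le_sum_of_ne {M : Type*} [AddCommMonoid M] [PartialOrder M] [CanonicallyOrderedAdd M]
    [Fintype V] (f : V → M) {u w : V} (huw : u ≠ w) :
    f u + f w ≤ ∑ v, f v := by
  classical
  rw [← sum_pair huw]
  exact sum_le_sum_of_subset (subset_univ _)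

theorem IsOIDRDF.card_lt_sum [Fintype V] [Nonempty V] (hf : IsOIDRDF G f)
    (hz : ∀ v, f v ≠ 0) : Fintype.card V < ∑ v, f v := by
  classical
  obtain ⟨u, hu⟩ : ∃ u, 2 ≤ f u := by
    obtain ⟨v⟩ := ‹Nonempty V›
    by_cases hv : f v = 1
    · obtain ⟨u, -, hu⟩ := hf.2.2.1 v hv
      exact ⟨u, hu⟩
    · exact ⟨v, by have := hz v; omega⟩
  calc Fintype.card V < 2 + #(univ.erase u) := by
        rw [card_erase_of_mem (mem_univ u), card_univ]
        have := Fintype.card_pos (α := V)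
        omega
    _ ≤ f u + ∑ v ∈ univ.erase u, f v := by
        gcongr
        simpa using card_nsmul_le_sum (univ.erase u) f 1 fun v _ => Nat.one_le_iff_ne_zero.2 (hz v)
    _ = ∑ v, f v := add_sum_erase _ f (mem_univ u)

theorem IsOIDRDF.three_le_sum [Fintype V] (hf : IsOIDRDF G f) (hV : 3 ≤ Fintype.card V) :
    3 ≤ ∑ v, f v := by
  by_cases hz : ∀ v, f v ≠ 0
  · have : Nonempty V := Fintype.card_pos_iff.1 (by omega)
    exact hV.trans (hf.card_lt_sum hz).le
  · obtain ⟨v, hv⟩ := not_forall_not.1 hz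
    rcases hf.2.1 v hv with ⟨u, -, hu⟩ | ⟨u, w, huw, -, -, hu, hw⟩
    · exact hu ▸ single_le_sum (fun _ _ => Nat.zero_le _) (mem_univ u)
    · have := add_le_sum_of_ne f huw
      omega

theorem three_le_oidRNum [Fintype V] (G : SimpleGraph V) (hV : 3 ≤ Fintype.card V) :
    3 ≤ oidRNum G := by
  obtain ⟨f, hf, hsum⟩ := exists_isOIDRDF_sum_eq_oidRNum G
  exact hsum ▸ hf.three_le_sum hV

theorem IsOIDRDF.exists_eq_single_of_sum_eq_three [Fintype V] [DecidableEq V]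
    (hf : IsOIDRDF G f) (hsum : ∑ v, f v = 3) (hV : 3 ≤ Fintype.card V) :
    ∃ c, f = Pi.single c 3 := by
  obtain ⟨v, hv⟩ : ∃ v, f v = 0 := by
    by_contra! hz
    have : Nonempty V := Fintype.card_pos_iff.1 (by omega)
    have := hf.card_lt_sum hz
    omega
  obtain ⟨c, hc⟩ : ∃ c, f c = 3 := by
    rcases hf.2.1 v hv with ⟨c, -, hc⟩ | ⟨u, w, huw, -, -, hu, hw⟩
    · exact ⟨c, hc⟩
    · have := add_le_sum_of_ne f huw
      omega
  refine ⟨c, funext fun x => ?_⟩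
  rcases eq_or_ne x c with rfl | hx
  · simpa using hc
  · have := add_le_sum_of_ne f hx
    simp only [Pi.single_apply, hx, if_false]
    omega

theorem isOIDRDF_single_three_iff [DecidableEq V] (c : V) :
    IsOIDRDF G (Pi.single c 3) ↔ G = starGraph c := by
  have hzero : ∀ x, (Pi.single c 3 : V → ℕ) x = 0 ↔ x ≠ c := by
    intro x
    by_cases hx : x = c <;> simp [hx]
  constructor
  · rintro ⟨-, h0, -, hind⟩
    have hleaf : ∀ x, x ≠ c → G.Adj x c := by
      intro x hx
      rcases h0 x ((hzero x).2 hx) with ⟨u, hxu, hu⟩ | ⟨u, w, -, -, -, hu, -⟩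
      · obtain rfl : u = c := by by_contra hu'; simp [hu'] at hu
        exact hxu
      · by_cases hu' : u = c <;> simp [hu'] at hu
    ext u v
    rw [starGraph_adj]
    constructor
    · intro huv
      refine ⟨huv.ne, ?_⟩
      by_contra! h
      exact hind u v huv ((hzero u).2 h.1) ((hzero v).2 h.2)
    · rintro ⟨huv, rfl | rfl⟩
      · exact (hleaf v huv.symm).symm
      · exact hleaf u huv
  · rintro rfl
    refine ⟨fun x => ?_, fun x hx => .inl ⟨c, ?_, by simp⟩, fun x hx => ?_, fun u v huv hu => ?_⟩
    · by_cases hx : x = c <;> simp [hx]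
    · exact starGraph_center_adj' ((hzero x).1 hx).symm
    · by_cases hx' : x = c <;> simp [hx'] at hx
    · have hv : v = c := by simpa [(hzero u).1 hu] using huv.2
      simp [hv]

theorem oidRNum_eq_three_iff [Fintype V] (G : SimpleGraph V) (hV : 3 ≤ Fintype.card V) :
    oidRNum G = 3 ↔ ∃ c, G = starGraph c := by
  classical
  constructor
  · intro h
    obtain ⟨f, hf, hsum⟩ := exists_isOIDRDF_sum_eq_oidRNum G
    obtain ⟨c, rfl⟩ := hf.exists_eq_single_of_sum_eq_three (hsum.trans h) hV
    exact ⟨c, (isOIDRDF_single_three_iff c).1 hf⟩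
  · rintro ⟨c, rfl⟩
    refine le_antisymm ?_ (three_le_oidRNum _ hV)
    simpa using oidRNum_le ((isOIDRDF_single_three_iff c).2 rfl)

end OIDRDF

theorem stmt5_general {V : Type*} [Fintype V] (G : SimpleGraph V) (n : ℕ)
    (hn : Fintype.card V = n) (h3 : 3 ≤ n) :
    oidRNum G = 3 ↔ Nonempty (G ≃g completeBipartiteGraph (Fin 1) (Fin (n - 1))) := by
  rw [oidRNum_eq_three_iff G (hn ▸ h3),
    nonempty_iso_completeBipartiteGraph_fin_one_iff G (by omega)]

theorem stmt5 {V : Type*} [Fintype V] (G : SimpleGraph V) (n : ℕ)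
    (hn : Fintype.card V = n) (h3 : 3 ≤ n) (hc : G.Connected) :
    oidRNum G = 3 ↔ Nonempty (G ≃g completeBipartiteGraph (Fin 1) (Fin (n - 1))) :=
  stmt5_general G n hn h3
end

section
/- For every graph G (with at least one vertex), γ_oidR(G) ≤ 2·γ_oiR(G), with equality if and only if G has no edges. -/
open SimpleGraph Finset

lemma oiR_le_aux {V : Type*} [Fintype V] (G : SimpleGraph V) {f : V → ℕ}
    (hf : IsOIRDF G f) : oiRNum G ≤ ∑ v, f v :=
  Nat.sInf_le ⟨f, hf, rfl⟩

lemma oidR_le_aux {V : Type*} [Fintype V] (G : SimpleGraph V) {f : V → ℕ}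
    (hf : IsOIDRDF G f) : oidRNum G ≤ ∑ v, f v :=
  Nat.sInf_le ⟨f, hf, rfl⟩

lemma oiR_spec_aux {V : Type*} [Fintype V] (G : SimpleGraph V) :
    ∃ f : V → ℕ, IsOIRDF G f ∧ oiRNum G = ∑ v, f v := by
  have hne : {w | ∃ f : V → ℕ, IsOIRDF G f ∧ w = ∑ v, f v}.Nonempty :=
    ⟨∑ _v : V, 1, fun _ => 1,
      ⟨fun v => by norm_num, fun v h => by simp at h, fun u v _ h => by simp at h⟩, rfl⟩
  exact Nat.sInf_mem hne

lemma oidR_spec_aux {V : Type*} [Fintype V] (G : SimpleGraph V) :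
    ∃ f : V → ℕ, IsOIDRDF G f ∧ oidRNum G = ∑ v, f v := by
  have hne : {w | ∃ f : V → ℕ, IsOIDRDF G f ∧ w = ∑ v, f v}.Nonempty :=
    ⟨∑ _v : V, 2, fun _ => 2,
      ⟨fun v => by norm_num, fun v h => by simp at h, fun v h => by simp at h,
        fun u v _ h => by simp at h⟩, rfl⟩
  exact Nat.sInf_mem hne

lemma double_of_oirdf {V : Type*} [Fintype V] (G : SimpleGraph V) {f : V → ℕ}
    (hf : IsOIRDF G f) : IsOIDRDF G (fun v => min 3 (2 * f v)) := by
  obtain ⟨h1, h2, h3⟩ := hf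
  have key : ∀ v, min 3 (2 * f v) = 0 ↔ f v = 0 := by
    intro v
    rcases le_total (2 * f v) 3 with h | h
    · rw [min_eq_right h]; omega
    · rw [min_eq_left h]; omega
  refine ⟨fun v => min_le_left _ _, ?_, ?_, ?_⟩
  · intro v hv
    obtain ⟨u, hu, hu2⟩ := h2 v ((key v).mp hv)
    exact Or.inl ⟨u, hu, by show min 3 (2 * f u) = 3; rw [hu2]; rfl⟩
  · intro v hv
    simp only at hv
    rcases le_total (2 * f v) 3 with h | h
    · rw [min_eq_right h] at hv; omega
    · rw [min_eq_left h] at hv; omega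
  · intro u v huv hu
    have : f v ≠ 0 := h3 u v huv ((key u).mp hu)
    simp only [ne_eq, key v]
    exact this

theorem stmt6 {V : Type*} [Fintype V] [Nonempty V] (G : SimpleGraph V) :
    oidRNum G ≤ 2 * oiRNum G ∧ (oidRNum G = 2 * oiRNum G ↔ G = ⊥) := by
  classical
  obtain ⟨f, hf, hw⟩ := oiR_spec_aux G
  have hle : oidRNum G ≤ 2 * oiRNum G := by
    calc oidRNum G ≤ ∑ v, min 3 (2 * f v) := oidR_le_aux G (double_of_oirdf G hf)
      _ ≤ ∑ v, 2 * f v := Finset.sum_le_sum fun v _ => min_le_right _ _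
      _ = 2 * ∑ v, f v := by rw [Finset.mul_sum]
      _ = 2 * oiRNum G := by rw [hw]
  refine ⟨hle, ?_, ?_⟩
  · -- equality → G = ⊥
    intro heq
    by_contra hbot
    have hadj : ∃ u v, G.Adj u v := by
      by_contra h
      push_neg at h
      apply hbot
      ext u v
      simp only [SimpleGraph.bot_adj, iff_false]
      exact h u v
    obtain ⟨u, v, huv⟩ := hadj
    have hlt : oidRNum G < 2 * oiRNum G := by
      by_cases h2 : ∃ v0, f v0 = 2
      · obtain ⟨v0, hv0⟩ := h2
        have hsum : ∑ x, min 3 (2 * f x) < ∑ x, 2 * f x := by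
          refine Finset.sum_lt_sum (fun i _ => min_le_right _ _) ⟨v0, Finset.mem_univ _, ?_⟩
          rw [hv0]; norm_num
        calc oidRNum G ≤ ∑ x, min 3 (2 * f x) := oidR_le_aux G (double_of_oirdf G hf)
          _ < ∑ x, 2 * f x := hsum
          _ = 2 * oiRNum G := by rw [hw, Finset.mul_sum]
      · push_neg at h2
        have hone : ∀ x, f x = 1 := by
          intro x
          have := hf.1 x
          have h2x := h2 x
          have : f x ≠ 0 := by
            intro h0
            obtain ⟨y, _, hy2⟩ := hf.2.1 x h0
            exact h2 y hy2
          omega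
        set g : V → ℕ := fun x => if x = v then 0 else if x = u then 3 else 2 with hg
        have hgdef : IsOIDRDF G g := by
          have hune : u ≠ v := huv.ne
          refine ⟨?_, ?_, ?_, ?_⟩
          · intro x; simp only [hg]; split_ifs <;> omega
          · intro x hx
            have hxv : x = v := by
              simp only [hg] at hx; split_ifs at hx <;> simp_all
            refine Or.inl ⟨u, ?_, ?_⟩
            · rw [hxv]; exact huv.symm
            · simp [hg, hune]
          · intro x hx
            simp only [hg] at hx; split_ifs at hx <;> simp_all
          · intro a b hab ha
            have hav : a = v := by
              simp only [hg] at ha; split_ifs at ha <;> simp_all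
            have hbv : b ≠ v := by rw [hav] at hab; exact hab.ne'
            simp only [hg, if_neg hbv]
            split_ifs <;> omega
        have hkey : ∑ x, (g x + (if x = v then 2 else 0)) ≤
            ∑ x, (2 + (if x = u then 1 else 0)) := by
          refine Finset.sum_le_sum fun x _ => ?_
          have hune : u ≠ v := huv.ne
          simp only [hg]
          split_ifs <;> omega
        have hs1 : ∑ x, (g x + (if x = v then 2 else 0)) = (∑ x, g x) + 2 := by
          rw [Finset.sum_add_distrib]
          simp
        have hs2 : ∑ x : V, (2 + (if x = u then 1 else 0)) = 2 * Fintype.card V + 1 := by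
          rw [Finset.sum_add_distrib]
          simp [Finset.card_univ, mul_comm]
        have hgsum : ∑ x, g x + 2 ≤ 2 * Fintype.card V + 1 := by
          rw [← hs1, ← hs2]; exact hkey
        have hfsum : ∑ x, f x = Fintype.card V := by
          simp [hone, Finset.card_univ]
        have h1 : oidRNum G ≤ ∑ x, g x := oidR_le_aux G hgdef
        have h2' : 2 * oiRNum G = 2 * Fintype.card V := by rw [hw, hfsum]
        omega
    omega
  · -- G = ⊥ → equality
    intro hbot
    subst hbot
    have hfone : ∀ x, 1 ≤ f x := by
      intro x
      rcases Nat.eq_zero_or_pos (f x) with h0 | h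
      · obtain ⟨y, hy, _⟩ := hf.2.1 x h0
        exact absurd hy (by simp)
      · exact h
    have hoiR_ge : Fintype.card V ≤ oiRNum (⊥ : SimpleGraph V) := by
      rw [hw]
      calc Fintype.card V = ∑ _x : V, 1 := by simp [Finset.card_univ]
        _ ≤ ∑ x, f x := Finset.sum_le_sum fun x _ => hfone x
    have hoiR_le : oiRNum (⊥ : SimpleGraph V) ≤ Fintype.card V := by
      have : oiRNum (⊥ : SimpleGraph V) ≤ ∑ _x : V, 1 :=
        oiR_le_aux _ ⟨fun v => by norm_num, fun v h => by simp at h, fun u v h => by simp at h⟩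
      simpa [Finset.card_univ] using this
    obtain ⟨g, hg, hgw⟩ := oidR_spec_aux (⊥ : SimpleGraph V)
    have hgtwo : ∀ x, 2 ≤ g x := by
      intro x
      rcases Nat.lt_or_ge (g x) 2 with h | h
      · exfalso
        have h01 : g x = 0 ∨ g x = 1 := by omega
        rcases h01 with h0 | h1
        · rcases hg.2.1 x h0 with ⟨y, hy, _⟩ | ⟨y, z, _, hy, _, _, _⟩ <;> simp at hy
        · obtain ⟨y, hy, _⟩ := hg.2.2.1 x h1
          simp at hy
      · exact h
    have hoidR_ge : 2 * Fintype.card V ≤ oidRNum (⊥ : SimpleGraph V) := by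
      rw [hgw]
      calc 2 * Fintype.card V = ∑ _x : V, 2 := by simp [Finset.card_univ, mul_comm]
        _ ≤ ∑ x, g x := Finset.sum_le_sum fun x _ => hgtwo x
    have hoiR_eq : oiRNum (⊥ : SimpleGraph V) = Fintype.card V := le_antisymm hoiR_le hoiR_ge
    omega
end

section
/- For every graph G with at least one vertex, the outer independent Roman domination number is strictly smaller than the outer independent double Roman domination number: γ_oiR(G) < γ_oidR(G). -/
open SimpleGraph Finset

theorem stmt7 {V : Type*} [Fintype V] [Nonempty V] (G : SimpleGraph V) :
    oiRNum G < oidRNum G := by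
  classical
  have hne : {w | ∃ f : V → ℕ, IsOIDRDF G f ∧ w = ∑ v, f v}.Nonempty :=
    ⟨∑ _v : V, (3:ℕ), fun _ => 3,
      ⟨fun _ => le_refl 3, fun v h => by simp at h, fun v h => by simp at h,
        fun u v _ h => by simp at h⟩, rfl⟩
  have hmem : oidRNum G ∈ {w | ∃ f : V → ℕ, IsOIDRDF G f ∧ w = ∑ v, f v} :=
    Nat.sInf_mem hne
  obtain ⟨f, hf, hEq⟩ := hmem
  obtain ⟨h1, h0, hone, hind⟩ := hf
  suffices h : ∃ g : V → ℕ, IsOIRDF G g ∧ ∑ v, g v < ∑ v, f v by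
    obtain ⟨g, hg, hlt⟩ := h
    have : oiRNum G ≤ ∑ v, g v := Nat.sInf_le ⟨g, hg, rfl⟩
    omega
  by_cases h3 : ∃ z, f z = 3
  · obtain ⟨z, hz⟩ := h3
    refine ⟨fun v => if 2 ≤ f v then 2 else f v, ⟨?_, ?_, ?_⟩, ?_⟩
    · intro v; dsimp only; split_ifs with h <;> omega
    · intro v hv
      have hv0 : f v = 0 := by dsimp only at hv; split_ifs at hv <;> omega
      rcases h0 v hv0 with ⟨u, hadj, hu⟩ | ⟨a, b, hab, ha, hb, fa, fb⟩
      · exact ⟨u, hadj, by simp [hu]⟩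
      · exact ⟨a, ha, by simp [fa]⟩
    · intro u v hadj hu
      have hu0 : f u = 0 := by dsimp only at hu; split_ifs at hu <;> omega
      have := hind u v hadj hu0
      dsimp only; split_ifs with h <;> omega
    · refine Finset.sum_lt_sum (fun i _ => by split_ifs with h <;> omega)
        ⟨z, Finset.mem_univ z, by simp [hz]⟩
  · push_neg at h3
    have h2 : ∀ v, f v ≤ 2 := fun v => by have := h1 v; have := h3 v; omega
    have hex2 : ∃ u, f u = 2 := by
      by_contra hno
      push_neg at hno
      obtain ⟨v⟩ := ‹Nonempty V›
      have hv : f v ≤ 1 := by have := h2 v; have := hno v; omega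
      interval_cases hv' : f v
      · rcases h0 v hv' with ⟨u, _, hu⟩ | ⟨a, b, _, _, _, fa, fb⟩
        · exact h3 u hu
        · exact hno a fa
      · obtain ⟨u, _, hu⟩ := hone v hv'
        have := h2 u; have := hno u; omega
    obtain ⟨u, hu⟩ := hex2
    refine ⟨Function.update f u 1, ⟨?_, ?_, ?_⟩, ?_⟩
    · intro v
      by_cases hvu : v = u <;> simp [Function.update_apply, hvu, h2 v]
    · intro v hv
      have hvu : v ≠ u := by
        intro h; rw [h, Function.update_self] at hv; omega
      rw [Function.update_apply, if_neg hvu] at hv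
      rcases h0 v hv with ⟨w, _, hw⟩ | ⟨a, b, hab, ha, hb, fa, fb⟩
      · exact absurd hw (h3 w)
      · by_cases hau : a = u
        · have hbu : b ≠ u := fun h => hab (hau.trans h.symm)
          exact ⟨b, hb, by rw [Function.update_apply, if_neg hbu]; exact fb⟩
        · exact ⟨a, ha, by rw [Function.update_apply, if_neg hau]; exact fa⟩
    · intro a b hadj ha
      have hau : a ≠ u := by
        intro h; rw [h, Function.update_self] at ha; omega
      rw [Function.update_apply, if_neg hau] at ha
      by_cases hbu : b = u
      · rw [hbu, Function.update_self]; omega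
      · rw [Function.update_apply, if_neg hbu]
        exact hind a b hadj ha
    · refine Finset.sum_lt_sum (fun i _ => ?_) ⟨u, Finset.mem_univ u, ?_⟩
      · by_cases hiu : i = u <;> simp [Function.update_apply, hiu, hu]
      · simp [Function.update_self, hu]
end

section
/- If G is a graph and f = (V_0, V_1, V_2) is a minimum-weight outer independent Roman dominating function of G, then γ_oidR(G) ≤ 2·γ_oiR(G) − |V_2|. -/
open SimpleGraph Finset

theorem stmt8 {V : Type*} [Fintype V] (G : SimpleGraph V) (f : V → ℕ)
    (hf : IsOIRDF G f) (hmin : ∑ v, f v = oiRNum G) :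
    oidRNum G ≤ 2 * oiRNum G - (Finset.univ.filter (fun v => f v = 2)).card := by
  obtain ⟨hle, hdom, hind⟩ := hf
  set g : V → ℕ := fun v => if f v = 2 then 3 else 2 * f v with hg
  have hg0 : ∀ v, g v = 0 → f v = 0 := by
    intro v hv
    simp only [hg] at hv
    split at hv <;> omega
  have hgoid : IsOIDRDF G g := by
    refine ⟨?_, ?_, ?_, ?_⟩
    · intro v; have := hle v; simp only [hg]; split <;> omega
    · intro v hv
      obtain ⟨u, hu, hu2⟩ := hdom v (hg0 v hv)
      exact Or.inl ⟨u, hu, by simp [hg, hu2]⟩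
    · intro v hv
      exfalso
      simp only [hg] at hv
      have := hle v
      split at hv <;> omega
    · intro u v huv hu hv
      exact hind u v huv (hg0 u hu) (hg0 v hv)
  have hsum : ∑ v, g v + (Finset.univ.filter (fun v => f v = 2)).card = 2 * ∑ v, f v := by
    rw [Finset.card_filter, Finset.mul_sum, ← Finset.sum_add_distrib]
    apply Finset.sum_congr rfl
    intro v _
    simp only [hg]
    split <;> omega
  have hmem : ∑ v, g v ∈ {w | ∃ f : V → ℕ, IsOIDRDF G f ∧ w = ∑ v, f v} :=
    ⟨g, hgoid, rfl⟩
  have h1 : oidRNum G ≤ ∑ v, g v := Nat.sInf_le hmem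
  omega
end

section
/- For any connected graph G of order n ≥ 2, γ_oidR(G) ≥ γ(G) + β(G), where γ(G) is the domination number and β(G) is the vertex cover number. -/
open SimpleGraph Finset

theorem stmt10 {V : Type*} [Fintype V] (G : SimpleGraph V)
    (hn : 2 ≤ Fintype.card V) (hc : G.Connected) :
    domNum G + coverNum G ≤ oidRNum G := by
  classical
  have hne : {w | ∃ f : V → ℕ, IsOIDRDF G f ∧ w = ∑ v, f v}.Nonempty :=
    ⟨∑ _v : V, 3, fun _ => 3,
      ⟨fun _ => le_refl 3, fun v h => by simp at h, fun v h => by simp at h,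
        fun u v _ h => by simp at h⟩, rfl⟩
  obtain ⟨f, hf, hw⟩ := Nat.sInf_mem hne
  obtain ⟨h3, h0, h1, hind⟩ := hf
  rw [show oidRNum G = ∑ v, f v from hw]
  clear hw hne hc hn
  have hdom : domNum G ≤ (Finset.univ.filter (fun v => 2 ≤ f v)).card := by
    apply Nat.sInf_le
    refine ⟨_, rfl, fun v hv => ?_⟩
    simp only [Finset.mem_filter, Finset.mem_univ, true_and, not_le] at hv
    interval_cases h : f v
    · rcases h0 v h with ⟨u, hu, hu3⟩ | ⟨u, w, _, hu, _, hu2, _⟩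
      · exact ⟨u, by simp [hu3], hu⟩
      · exact ⟨u, by simp [hu2], hu⟩
    · obtain ⟨u, hu, hu2⟩ := h1 v h
      exact ⟨u, by simp [hu2], hu⟩
  have hcov : coverNum G ≤ (Finset.univ.filter (fun v => 1 ≤ f v)).card := by
    apply Nat.sInf_le
    refine ⟨_, rfl, fun u v huv => ?_⟩
    simp only [Finset.mem_filter, Finset.mem_univ, true_and]
    by_contra hcon
    push_neg at hcon
    exact hind u v huv (by omega) (by omega)
  calc domNum G + coverNum G
      ≤ (Finset.univ.filter (fun v => 2 ≤ f v)).card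
        + (Finset.univ.filter (fun v => 1 ≤ f v)).card := by omega
    _ ≤ ∑ v, f v := by
        rw [Finset.card_filter, Finset.card_filter, ← Finset.sum_add_distrib]
        apply Finset.sum_le_sum
        intro v _
        split_ifs <;> omega
end

section
/- For any connected graph G of order n ≥ 2 with maximum degree Δ, γ_oidR(G) ≥ (2/Δ)·α(G) + β(G), where α(G) is the independence number and β(G) is the vertex cover number. -/
open SimpleGraph Finset

/-!
Let `f` be a minimum OIDRDF with zero set `Z`. Since `Z` is independent, `|Z| ≤ α` and the
support of `f` is a vertex cover, and `w(f) = (n - |Z|) + ∑ (f v - 1)`. A zero needs excess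
weight `∑ (f u - 1) ≥ 2` on its neighbours, and a vertex has at most `Δ` neighbours, so
`2|Z| ≤ Δ ∑ (f v - 1)`. Together with `β ≤ n - α` this gives `Δ w(f) ≥ Δ β + 2α` once `Δ ≥ 2`.
For `Δ = 0` the claim is `β ≤ w(f)`, and a connected graph with `Δ = 1` is `K₂`, where
`α = β = 1` and `w(f) ≥ 3`.
-/

namespace SimpleGraph

variable {V : Type*} [Fintype V] (G : SimpleGraph V)

section MaxDeg

variable [DecidableRel G.Adj]

lemma maxDeg_eq_sSup_degree : maxDeg G = sSup (Set.range fun v => G.degree v) := by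
  simp only [maxDeg, ← card_neighborSet_eq_degree, ← Nat.card_eq_fintype_card]
  rfl

lemma degree_le_maxDeg (v : V) : G.degree v ≤ maxDeg G :=
  G.maxDeg_eq_sSup_degree ▸ le_csSup (Set.finite_range _).bddAbove ⟨v, rfl⟩

lemma exists_degree_eq_maxDeg [Nonempty V] : ∃ v, G.degree v = maxDeg G :=
  G.maxDeg_eq_sSup_degree ▸ Nat.sSup_mem (Set.range_nonempty _) (Set.finite_range _).bddAbove

lemma sum_sum_neighborFinset_eq {M : Type*} [AddCommMonoid M] (g : V → M) :
    ∑ v, ∑ u ∈ G.neighborFinset v, g u = ∑ u, G.degree u • g u := by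
  rw [Finset.sum_comm' (t' := univ) (s' := fun u => G.neighborFinset u)
    (fun v u => by simp [adj_comm])]
  simp_rw [Finset.sum_const, card_neighborFinset_eq_degree]

lemma sum_sum_neighborFinset_le_maxDeg_mul (g : V → ℕ) :
    ∑ v, ∑ u ∈ G.neighborFinset v, g u ≤ maxDeg G * ∑ u, g u := by
  rw [sum_sum_neighborFinset_eq, Finset.mul_sum]
  exact Finset.sum_le_sum fun u _ => Nat.mul_le_mul_right _ (G.degree_le_maxDeg u)

end MaxDeg

variable {G} in
lemma Connected.eq_or_eq_of_adj_of_degree_le_one [DecidableRel G.Adj] (hc : G.Connected)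
    (hdeg : ∀ x, G.degree x ≤ 1) {v u : V} (hvu : G.Adj v u) (x : V) : x = v ∨ x = u := by
  have hstep : ∀ a b, G.Adj a b → (a = v ∨ a = u) → (b = v ∨ b = u) := by
    have huniq : ∀ a b c, G.Adj a b → G.Adj a c → b = c := fun a b c hab hac =>
      Finset.card_le_one.mp (hdeg a) b ((G.mem_neighborFinset a b).2 hab) c
        ((G.mem_neighborFinset a c).2 hac)
    rintro a b hab (rfl | rfl)
    · exact Or.inr (huniq a b u hab hvu)
    · exact Or.inl (huniq a b v hab hvu.symm)
  obtain ⟨p⟩ := hc.preconnected v x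
  suffices ∀ a b (p : G.Walk a b), (a = v ∨ a = u) → (b = v ∨ b = u) from this v x p (Or.inl rfl)
  intro a b p
  induction p with
  | nil => exact id
  | cons h _ ih => exact fun ha => ih (hstep _ _ h ha)

lemma bddAbove_indNum_set :
    BddAbove {k | ∃ S : Finset V, S.card = k ∧ ∀ u ∈ S, ∀ v ∈ S, ¬ G.Adj u v} :=
  ⟨Fintype.card V, by rintro k ⟨T, rfl, -⟩; exact T.card_le_univ⟩

lemma card_le_indNum {S : Finset V} (hS : ∀ u ∈ S, ∀ v ∈ S, ¬ G.Adj u v) :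
    S.card ≤ indNum G :=
  le_csSup G.bddAbove_indNum_set ⟨S, rfl, hS⟩

lemma exists_card_eq_indNum :
    ∃ S : Finset V, S.card = indNum G ∧ ∀ u ∈ S, ∀ v ∈ S, ¬ G.Adj u v :=
  Nat.sSup_mem (s := {k | ∃ S : Finset V, S.card = k ∧ ∀ u ∈ S, ∀ v ∈ S, ¬ G.Adj u v})
    ⟨0, ∅, rfl, by simp⟩ G.bddAbove_indNum_set

lemma indNum_lt_card_of_adj {v u : V} (hvu : G.Adj v u) : indNum G < Fintype.card V := by
  obtain ⟨S, hS, hind⟩ := G.exists_card_eq_indNum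
  rw [← hS, Finset.card_lt_iff_ne_univ]
  rintro rfl
  exact hind v (mem_univ v) u (mem_univ u) hvu

lemma coverNum_le_card {S : Finset V} (hS : ∀ u v, G.Adj u v → u ∈ S ∨ v ∈ S) :
    coverNum G ≤ S.card :=
  Nat.sInf_le ⟨S, rfl, hS⟩

lemma coverNum_add_indNum_le_card [DecidableEq V] : coverNum G + indNum G ≤ Fintype.card V := by
  obtain ⟨S, hS, hind⟩ := G.exists_card_eq_indNum
  have hcover : coverNum G ≤ Sᶜ.card := G.coverNum_le_card fun u v huv => by
    by_contra! h
    simp only [mem_compl, not_not] at h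
    exact hind u h.1 v h.2 huv
  rw [card_compl] at hcover
  have := S.card_le_univ
  omega

lemma exists_isOIDRDF_sum_eq_oidRNum :
    ∃ f, IsOIDRDF G f ∧ ∑ v, f v = oidRNum G := by
  obtain ⟨f, hf, hsum⟩ := Nat.sInf_mem (s := {w | ∃ f : V → ℕ, IsOIDRDF G f ∧ w = ∑ v, f v})
    ⟨_, fun _ => 3, ⟨fun _ => le_rfl, by simp, by simp, by simp⟩, rfl⟩
  exact ⟨f, hf, hsum.symm⟩

end SimpleGraph

lemma Finset.sum_eq_card_filter_ne_zero_add_sum_sub_one {ι : Type*} (s : Finset ι) (f : ι → ℕ) :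
    ∑ i ∈ s, f i = (s.filter (f · ≠ 0)).card + ∑ i ∈ s, (f i - 1) := by
  have h : ∀ i, f i = (if f i ≠ 0 then 1 else 0) + (f i - 1) := fun i => by split_ifs <;> omega
  rw [Finset.sum_congr rfl fun i _ => h i, Finset.sum_add_distrib, Finset.sum_boole, Nat.cast_id]

namespace IsOIDRDF

variable {V : Type*} {G : SimpleGraph V} {f : V → ℕ}

lemma three_le_add_of_adj (hf : IsOIDRDF G f) {v u : V} (hv : ∀ x, G.Adj v x → x = u)
    (hu : ∀ x, G.Adj u x → x = v) : 3 ≤ f v + f u := by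
  have hzero : ∀ a b, (∀ x, G.Adj a x → x = b) → f a = 0 → f b = 3 := fun a b hab ha => by
    rcases hf.2.1 a ha with ⟨x, hx, h3⟩ | ⟨x, y, hxy, hx, hy, -, -⟩
    · exact hab x hx ▸ h3
    · exact absurd ((hab x hx).trans (hab y hy).symm) hxy
  have hone : ∀ a b, (∀ x, G.Adj a x → x = b) → f a = 1 → 2 ≤ f b := fun a b hab ha => by
    obtain ⟨x, hx, h2⟩ := hf.2.2.1 a ha
    exact hab x hx ▸ h2
  have := hzero v u hv; have := hzero u v hu; have := hone v u hv; have := hone u v hu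
  omega

variable [Fintype V]

lemma card_zeros_le_indNum (hf : IsOIDRDF G f) : (univ.filter (f · = 0)).card ≤ indNum G :=
  G.card_le_indNum fun u hu v hv huv => by
    simp only [mem_filter, mem_univ, true_and] at hu hv
    exact hf.2.2.2 u v huv hu hv

lemma coverNum_le_card_nonzeros (hf : IsOIDRDF G f) :
    coverNum G ≤ (univ.filter (f · ≠ 0)).card :=
  G.coverNum_le_card fun u v huv => by
    simp only [mem_filter, mem_univ, true_and]
    by_contra! h
    exact hf.2.2.2 u v huv h.1 h.2

lemma two_le_sum_neighborFinset_sub_one [DecidableRel G.Adj] (hf : IsOIDRDF G f) {v : V}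
    (hv : f v = 0) : 2 ≤ ∑ u ∈ G.neighborFinset v, (f u - 1) := by
  rcases hf.2.1 v hv with ⟨u, hvu, hu⟩ | ⟨u, w, huw, hvu, hvw, hu, hw⟩
  · calc 2 = f u - 1 := by omega
      _ ≤ _ := single_le_sum (f := fun u => f u - 1) (fun _ _ => Nat.zero_le _)
          ((G.mem_neighborFinset v u).2 hvu)
  · calc 2 = (f u - 1) + (f w - 1) := by omega
      _ ≤ _ := add_le_sum (f := fun u => f u - 1) (fun _ _ => Nat.zero_le _)
          ((G.mem_neighborFinset v u).2 hvu) ((G.mem_neighborFinset v w).2 hvw) huw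

lemma two_mul_card_zeros_le (hf : IsOIDRDF G f) :
    2 * (univ.filter (f · = 0)).card ≤ maxDeg G * ∑ u, (f u - 1) := by
  classical
  calc 2 * (univ.filter (f · = 0)).card
      = ∑ _v ∈ univ.filter (f · = 0), 2 := by rw [sum_const, smul_eq_mul, mul_comm]
    _ ≤ ∑ v ∈ univ.filter (f · = 0), ∑ u ∈ G.neighborFinset v, (f u - 1) :=
        sum_le_sum fun v hv => hf.two_le_sum_neighborFinset_sub_one (mem_filter.1 hv).2
    _ ≤ ∑ v, ∑ u ∈ G.neighborFinset v, (f u - 1) :=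
        sum_le_sum_of_subset (filter_subset _ _)
    _ ≤ maxDeg G * ∑ u, (f u - 1) := G.sum_sum_neighborFinset_le_maxDeg_mul _

lemma coverNum_le_sum (hf : IsOIDRDF G f) : coverNum G ≤ ∑ v, f v := by
  rw [sum_eq_card_filter_ne_zero_add_sum_sub_one]
  exact hf.coverNum_le_card_nonzeros.trans (Nat.le_add_right _ _)

lemma maxDeg_mul_coverNum_add_two_mul_indNum_le (hf : IsOIDRDF G f) (hΔ : 2 ≤ maxDeg G) :
    maxDeg G * coverNum G + 2 * indNum G ≤ maxDeg G * ∑ v, f v := by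
  classical
  have hsplit := card_filter_add_card_filter_not (s := univ) (f · = 0)
  have hcover := G.coverNum_add_indNum_le_card
  have hzeros := hf.card_zeros_le_indNum
  have hcount := hf.two_mul_card_zeros_le
  rw [sum_eq_card_filter_ne_zero_add_sum_sub_one]
  simp only [card_univ] at hsplit
  nlinarith

end IsOIDRDF

lemma SimpleGraph.Connected.two_mul_indNum_add_coverNum_le_sum {V : Type*} [Fintype V]
    {G : SimpleGraph V} (hc : G.Connected) (hΔ : maxDeg G = 1) {f : V → ℕ} (hf : IsOIDRDF G f) :
    2 * indNum G + coverNum G ≤ ∑ v, f v := by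
  classical
  have := hc.nonempty
  obtain ⟨v, hv⟩ := G.exists_degree_eq_maxDeg
  obtain ⟨u, hvu⟩ := G.degree_pos_iff_exists_adj v |>.1 (by omega)
  have hall := hc.eq_or_eq_of_adj_of_degree_le_one (fun x => hΔ ▸ G.degree_le_maxDeg x) hvu
  have hcard : Fintype.card V ≤ 2 :=
    (card_le_card (fun x _ => by rcases hall x with rfl | rfl <;> simp)).trans
      (card_le_two (a := v) (b := u))
  have hvu' : ∀ x, G.Adj v x → x = u := fun x hx =>
    (hall x).resolve_left fun h => G.loopless.irrefl v (h ▸ hx)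
  have huv' : ∀ x, G.Adj u x → x = v := fun x hx =>
    (hall x).resolve_right fun h => G.loopless.irrefl u (h ▸ hx)
  have h3 := hf.three_le_add_of_adj hvu' huv'
  have hpair := add_le_sum (f := f) (fun _ _ => Nat.zero_le _) (mem_univ v) (mem_univ u) hvu.ne
  have hind := G.indNum_lt_card_of_adj hvu
  have hcover := G.coverNum_add_indNum_le_card
  omega

theorem stmt11_general {V : Type*} [Fintype V] (G : SimpleGraph V)
    (hc : G.Connected) :
    (2 / (maxDeg G : ℝ)) * (indNum G : ℝ) + (coverNum G : ℝ) ≤ (oidRNum G : ℝ) := by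
  obtain ⟨f, hf, hsum⟩ := G.exists_isOIDRDF_sum_eq_oidRNum
  rw [← hsum]
  rcases Nat.lt_or_ge (maxDeg G) 2 with hΔ | hΔ
  · obtain hΔ | hΔ : maxDeg G = 0 ∨ maxDeg G = 1 := by omega
    · simp only [hΔ, Nat.cast_zero, div_zero, zero_mul, zero_add]
      exact_mod_cast hf.coverNum_le_sum
    · rw [hΔ, Nat.cast_one, div_one]
      exact_mod_cast hc.two_mul_indNum_add_coverNum_le_sum hΔ hf
  · have hΔpos : (0 : ℝ) < maxDeg G := by exact_mod_cast (by omega : 0 < maxDeg G)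
    rw [div_mul_eq_mul_div, div_add' _ _ _ hΔpos.ne', div_le_iff₀ hΔpos]
    exact_mod_cast by linarith [hf.maxDeg_mul_coverNum_add_two_mul_indNum_le hΔ]

theorem stmt11 {V : Type*} [Fintype V] (G : SimpleGraph V)
    (hn : 2 ≤ Fintype.card V) (hc : G.Connected) :
    (2 / (maxDeg G : ℝ)) * (indNum G : ℝ) + (coverNum G : ℝ) ≤ (oidRNum G : ℝ) :=
  stmt11_general G hc
end

section
/- For any tree T, γ_oidR(T) ≥ 2·β(T) + 1, where β(T) is the vertex cover number of T. -/
open SimpleGraph Finset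

namespace OIDRAux

variable {V : Type*} (G : SimpleGraph V)

lemma path_length_eq (hT : G.IsTree) {r x : V} (q : G.Walk r x) (hq : q.IsPath) :
    q.length = G.dist r x := by
  obtain ⟨q0, hq0, hq0len⟩ := hT.1.exists_path_of_dist r x
  have h := hT.2.path_unique ⟨q, hq⟩ ⟨q0, hq0⟩
  have : q = q0 := Subtype.ext_iff.1 h
  rw [this, hq0len]

lemma isPath_concat {a b c : V} {p : G.Walk a b} (hp : p.IsPath) (h : G.Adj b c)
    (hc : c ∉ p.support) : (p.concat h).IsPath := by
  rw [← Walk.isPath_reverse_iff, Walk.reverse_concat]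
  refine (Walk.cons_isPath_iff _ _).2 ⟨(Walk.isPath_reverse_iff p).2 hp, ?_⟩
  simpa using hc

lemma exists_leaf (hT : G.IsTree) {A : Finset V} (hA : A.Nonempty) :
    ∃ u ∈ A, ∀ x ∈ A, ∀ y ∈ A, G.Adj u x → G.Adj u y → x = y := by
  classical
  obtain ⟨r, hr⟩ := hA
  obtain ⟨u, huA, hmax⟩ := A.exists_max_image (fun x => G.dist r x) ⟨r, hr⟩
  obtain ⟨P, hP, hPlen⟩ := hT.1.exists_path_of_dist r u
  have key : ∀ w ∈ A, G.Adj u w → w = P.getVert (P.length - 1) := by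
    intro w hwA hadj
    by_cases hws : w ∈ P.support
    · set Q := P.takeUntil w hws with hQdef
      have hQpath : Q.IsPath := hP.takeUntil hws
      have hspec : Q.append (P.dropUntil w hws) = P := P.take_spec hws
      have hdrop1 : 1 ≤ (P.dropUntil w hws).length := by
        by_contra h
        have h0 : (P.dropUntil w hws).length = 0 := by omega
        exact (G.ne_of_adj hadj) (Walk.eq_of_length_eq_zero h0).symm
      have hQlen : Q.length + (P.dropUntil w hws).length = P.length := by
        have := congrArg Walk.length hspec
        rwa [Walk.length_append] at this
      have huQ : u ∉ Q.support := by
        intro huQ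
        have hR : (Q.takeUntil u huQ).IsPath := hQpath.takeUntil huQ
        have hRlen : (Q.takeUntil u huQ).length = G.dist r u := path_length_eq G hT _ hR
        have hle : (Q.takeUntil u huQ).length ≤ Q.length := Walk.length_takeUntil_le Q huQ
        omega
      have hQ'path : (Q.concat hadj.symm).IsPath := isPath_concat G hQpath hadj.symm huQ
      have hPeq : Q.concat hadj.symm = P :=
        Subtype.ext_iff.1 (hT.2.path_unique ⟨Q.concat hadj.symm, hQ'path⟩ ⟨P, hP⟩)
      have : P.getVert (P.length - 1) = w := by
        rw [← hPeq, Walk.length_concat, Nat.add_sub_cancel, Walk.concat_eq_append,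
          Walk.getVert_append, if_neg (lt_irrefl _), Nat.sub_self, Walk.getVert_zero]
      exact this.symm
    · exfalso
      have hc : (P.concat hadj).IsPath := isPath_concat G hP hadj hws
      have h1 : (P.concat hadj).length = G.dist r w := path_length_eq G hT _ hc
      have hlen : (P.concat hadj).length = P.length + 1 := Walk.length_concat _ _
      have h2 := hmax w hwA
      omega
  exact ⟨u, huA, fun x hx y hy h1 h2 => (key x hx h1).trans (key y hy h2).symm⟩

variable [DecidableEq V] [DecidableRel G.Adj]

/-- Validity of an OIDRDF-like function on an active set `A`. -/
def Valid (f : V → ℕ) (A : Finset V) : Prop :=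
  (∀ v ∈ A, f v = 0 → (∃ u ∈ A, G.Adj v u ∧ f u = 3) ∨
      ∃ u ∈ A, ∃ w ∈ A, u ≠ w ∧ G.Adj v u ∧ G.Adj v w ∧ f u = 2 ∧ f w = 2) ∧
  (∀ v ∈ A, f v = 1 → ∃ u ∈ A, G.Adj v u ∧ 2 ≤ f u) ∧
  (∀ u ∈ A, ∀ v ∈ A, G.Adj u v → f u = 0 → f v ≠ 0)

/-- Twice the number of edges inside `A`. -/
def e2 (A : Finset V) : ℕ := ∑ v ∈ A, (A.filter (G.Adj v)).card

lemma e2_erase {A : Finset V} {u : V} (hu : u ∈ A) :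
    e2 G A = e2 G (A.erase u) + 2 * (A.filter (G.Adj u)).card := by
  have key : ∀ v ∈ A.erase u,
      (A.filter (G.Adj v)).card
        = ((A.erase u).filter (G.Adj v)).card + (if G.Adj v u then 1 else 0) := by
    intro v hv
    rw [filter_erase]
    by_cases h : G.Adj v u
    · rw [if_pos h, card_erase_add_one (mem_filter.2 ⟨hu, h⟩)]
    · rw [if_neg h, add_zero, erase_eq_of_notMem (fun hc => h (mem_filter.1 hc).2)]
  have h1 : e2 G A = (A.filter (G.Adj u)).card + ∑ v ∈ A.erase u, (A.filter (G.Adj v)).card :=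
    (add_sum_erase A _ hu).symm
  have h2 : ∑ v ∈ A.erase u, (A.filter (G.Adj v)).card
      = e2 G (A.erase u) + ∑ v ∈ A.erase u, (if G.Adj v u then 1 else 0) := by
    rw [sum_congr rfl key, sum_add_distrib]
    rfl
  have h3 : ∑ v ∈ A.erase u, (if G.Adj v u then 1 else 0)
      = ((A.erase u).filter (fun v => G.Adj v u)).card := (card_filter _ _).symm
  have h4 : ((A.erase u).filter (fun v => G.Adj v u)).card = (A.filter (G.Adj u)).card := by
    congr 1
    ext x
    simp only [mem_filter, mem_erase]
    constructor
    · rintro ⟨⟨-, hA⟩, ha⟩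
      exact ⟨hA, ha.symm⟩
    · rintro ⟨hA, ha⟩
      exact ⟨⟨fun h => G.irrefl (h ▸ ha), hA⟩, ha.symm⟩
  rw [h1, h2, h3, h4, e2]
  ring

lemma Valid.subset {f : V → ℕ} {A B : Finset V} (hf : Valid G f A) (hBA : B ⊆ A)
    (h : ∀ x ∈ A, x ∉ B → ∀ v ∈ B, G.Adj v x → f x ≤ 1) : Valid G f B := by
  obtain ⟨h0, h1, h01⟩ := hf
  have hmem : ∀ v ∈ B, ∀ z ∈ A, G.Adj v z → 2 ≤ f z → z ∈ B := by
    intro v hv z hz hadj h2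
    by_contra hzB
    have := h z hz hzB v hv hadj
    omega
  refine ⟨?_, ?_, fun x hx y hy hadj hx0 => h01 x (hBA hx) y (hBA hy) hadj hx0⟩
  · intro v hv hv0
    rcases h0 v (hBA hv) hv0 with ⟨z, hz, hadj, hz3⟩ | ⟨z, hz, z', hz', hne, ha, ha', h2, h2'⟩
    · exact Or.inl ⟨z, hmem v hv z hz hadj (by omega), hadj, hz3⟩
    · exact Or.inr ⟨z, hmem v hv z hz ha (by omega), z',
        hmem v hv z' hz' ha' (by omega), hne, ha, ha', h2, h2'⟩
  · intro v hv hv1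
    obtain ⟨z, hz, hadj, h2⟩ := h1 v (hBA hv) hv1
    exact ⟨z, hmem v hv z hz hadj h2, hadj, h2⟩

lemma Valid.erase_leaf {f : V → ℕ} {A : Finset V} {u s : V} (hf : Valid G f A)
    (hs : s ∈ A)
    (hleaf : ∀ x ∈ A, G.Adj u x → x = s)
    (hs0 : f s = 0 → (∃ z ∈ A.erase u, G.Adj s z ∧ f z = 3) ∨
      ∃ z ∈ A.erase u, ∃ z' ∈ A.erase u, z ≠ z' ∧ G.Adj s z ∧ G.Adj s z' ∧ f z = 2 ∧ f z' = 2)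
    (hs1 : f s = 1 → ∃ z ∈ A.erase u, G.Adj s z ∧ 2 ≤ f z) :
    Valid G f (A.erase u) := by
  obtain ⟨h0, h1, h01⟩ := hf
  have hmem : ∀ v ∈ A.erase u, v ≠ s → ∀ z ∈ A, G.Adj v z → z ∈ A.erase u := by
    intro v hv hvs z hz hadj
    refine mem_erase.2 ⟨?_, hz⟩
    rintro rfl
    exact hvs (hleaf v (mem_of_mem_erase hv) hadj.symm)
  refine ⟨?_, ?_, fun x hx y hy hadj hx0 =>
    h01 x (mem_of_mem_erase hx) y (mem_of_mem_erase hy) hadj hx0⟩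
  · intro v hv hv0
    by_cases hvs : v = s
    · subst hvs; exact hs0 hv0
    · rcases h0 v (mem_of_mem_erase hv) hv0 with
        ⟨z, hz, hadj, hz3⟩ | ⟨z, hz, z', hz', hne, ha, ha', h2, h2'⟩
      · exact Or.inl ⟨z, hmem v hv hvs z hz hadj, hadj, hz3⟩
      · exact Or.inr ⟨z, hmem v hv hvs z hz ha, z', hmem v hv hvs z' hz' ha',
          hne, ha, ha', h2, h2'⟩
  · intro v hv hv1
    by_cases hvs : v = s
    · subst hvs; exact hs1 hv1
    · obtain ⟨z, hz, hadj, h2⟩ := h1 v (mem_of_mem_erase hv) hv1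
      exact ⟨z, hmem v hv hvs z hz hadj, hadj, h2⟩

lemma Valid.update_three {f : V → ℕ} {A : Finset V} (hf : Valid G f A) (s : V) :
    Valid G (Function.update f s 3) A := by
  obtain ⟨h0, h1, h01⟩ := hf
  have hup : ∀ x, Function.update f s 3 x = if x = s then 3 else f x := fun x =>
    Function.update_apply f s 3 x
  refine ⟨?_, ?_, ?_⟩
  · intro v hv hv0
    rw [hup] at hv0
    split at hv0
    · omega
    · rcases h0 v hv hv0 with ⟨z, hz, hadj, hz3⟩ | ⟨z, hz, z', hz', hne, ha, ha', h2, h2'⟩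
      · refine Or.inl ⟨z, hz, hadj, ?_⟩
        rw [hup]
        split
        · rfl
        · exact hz3
      · by_cases hzs : z = s
        · exact Or.inl ⟨z, hz, ha, by rw [hup, if_pos hzs]⟩
        · by_cases hz's : z' = s
          · exact Or.inl ⟨z', hz', ha', by rw [hup, if_pos hz's]⟩
          · exact Or.inr ⟨z, hz, z', hz', hne, ha, ha',
              by rw [hup, if_neg hzs]; exact h2, by rw [hup, if_neg hz's]; exact h2'⟩
  · intro v hv hv1
    rw [hup] at hv1
    split at hv1
    · omega
    · obtain ⟨z, hz, hadj, h2⟩ := h1 v hv hv1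
      refine ⟨z, hz, hadj, ?_⟩
      rw [hup]; split <;> first | omega | (rename_i hh; subst hh; omega)
  · intro x hx y hy hadj hx0
    rw [hup] at hx0
    split at hx0
    · omega
    · have := h01 x hx y hy hadj hx0
      rw [hup]; split <;> first | omega | (rename_i hh; subst hh; omega)

lemma Valid.update_two {f : V → ℕ} {A : Finset V} {s : V} (hf : Valid G f A)
    (hs : f s ≤ 1) : Valid G (Function.update f s 2) A := by
  obtain ⟨h0, h1, h01⟩ := hf
  have hup : ∀ x, Function.update f s 2 x = if x = s then 2 else f x := fun x =>
    Function.update_apply f s 2 x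
  refine ⟨?_, ?_, ?_⟩
  · intro v hv hv0
    rw [hup] at hv0
    split at hv0
    · omega
    · rcases h0 v hv hv0 with ⟨z, hz, hadj, hz3⟩ | ⟨z, hz, z', hz', hne, ha, ha', h2, h2'⟩
      · refine Or.inl ⟨z, hz, hadj, ?_⟩
        rw [hup]; split <;> first | omega | (rename_i hh; subst hh; omega)
      · refine Or.inr ⟨z, hz, z', hz', hne, ha, ha', ?_, ?_⟩ <;>
          (rw [hup]; split <;> first | omega | (rename_i hh; subst hh; omega))
  · intro v hv hv1
    rw [hup] at hv1
    split at hv1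
    · omega
    · obtain ⟨z, hz, hadj, h2⟩ := h1 v hv hv1
      refine ⟨z, hz, hadj, ?_⟩
      rw [hup]; split <;> first | omega | (rename_i hh; subst hh; omega)
  · intro x hx y hy hadj hx0
    rw [hup] at hx0
    split at hx0
    · omega
    · have := h01 x hx y hy hadj hx0
      rw [hup]; split <;> first | omega | (rename_i hh; subst hh; omega)

lemma Valid.update_one {f : V → ℕ} {A : Finset V} {s : V} (hf : Valid G f A)
    (hs0 : f s = 0) (hz : ∃ z ∈ A, G.Adj s z ∧ 2 ≤ f z) :
    Valid G (Function.update f s 1) A := by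
  obtain ⟨h0, h1, h01⟩ := hf
  have hup : ∀ x, Function.update f s 1 x = if x = s then 1 else f x := fun x =>
    Function.update_apply f s 1 x
  refine ⟨?_, ?_, ?_⟩
  · intro v hv hv0
    rw [hup] at hv0
    split at hv0
    · omega
    · rcases h0 v hv hv0 with ⟨z, hz', hadj, hz3⟩ | ⟨z, hz', z', hz'', hne, ha, ha', h2, h2'⟩
      · refine Or.inl ⟨z, hz', hadj, ?_⟩
        rw [hup]; split <;> first | omega | (rename_i hh; subst hh; omega)
      · refine Or.inr ⟨z, hz', z', hz'', hne, ha, ha', ?_, ?_⟩ <;>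
          (rw [hup]; split <;> first | omega | (rename_i hh; subst hh; omega))
  · intro v hv hv1
    rw [hup] at hv1
    split at hv1
    · obtain ⟨z, hzA, hadj, h2⟩ := hz
      rename_i hvs
      subst hvs
      refine ⟨z, hzA, hadj, ?_⟩
      rw [hup]; split <;> first | omega | (rename_i hh; subst hh; omega)
    · obtain ⟨z, hz', hadj, h2⟩ := h1 v hv hv1
      refine ⟨z, hz', hadj, ?_⟩
      rw [hup]; split <;> first | omega | (rename_i hh; subst hh; omega)
  · intro x hx y hy hadj hx0
    rw [hup] at hx0
    split at hx0
    · omega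
    · have := h01 x hx y hy hadj hx0
      rw [hup]; split <;> first | omega | (rename_i hh; subst hh; omega)

lemma indep_insert {I : Finset V} (hind : ∀ x ∈ I, ∀ y ∈ I, ¬ G.Adj x y) (u : V)
    (h : ∀ y ∈ I, ¬ G.Adj u y) : ∀ x ∈ insert u I, ∀ y ∈ insert u I, ¬ G.Adj x y := by
  intro x hx y hy hadj
  rcases mem_insert.1 hx with hx' | hx'
  · rcases mem_insert.1 hy with hy' | hy'
    · exact G.irrefl (hx' ▸ hy' ▸ hadj)
    · exact h y hy' (hx' ▸ hadj)
  · rcases mem_insert.1 hy with hy' | hy'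
    · exact h x hx' (hy' ▸ hadj.symm)
    · exact hind x hx' y hy' hadj

theorem main (hT : G.IsTree) :
    ∀ (n : ℕ) (A : Finset V) (f : V → ℕ), A.card ≤ n → Valid G f A →
      ∃ I : Finset V, I ⊆ A ∧ (∀ x ∈ I, ∀ y ∈ I, ¬ G.Adj x y) ∧ (∀ v ∈ I, f v ≤ 2) ∧
        6 * A.card ≤ 4 * I.card + 2 * ∑ v ∈ A, f v + e2 G A := by
  intro n
  induction n with
  | zero =>
    intro A f hcard _
    have hA : A = ∅ := card_eq_zero.1 (Nat.le_zero.1 hcard)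
    subst hA
    exact ⟨∅, Subset.rfl, by simp, by simp, by simp [e2]⟩
  | succ n ih =>
    intro A f hcard hf
    rcases A.eq_empty_or_nonempty with rfl | hA
    · exact ⟨∅, Subset.rfl, by simp, by simp, by simp [e2]⟩
    obtain ⟨u, huA, hleaf⟩ := exists_leaf G hT hA
    have huA' : u ∉ A.erase u := notMem_erase u A
    have hcardA : (A.erase u).card + 1 = A.card := card_erase_add_one huA
    have hcardA'n : (A.erase u).card ≤ n := by omega
    have hsubA' : A.erase u ⊆ A := erase_subset u A
    have hsumA : f u + ∑ v ∈ A.erase u, f v = ∑ v ∈ A, f v := add_sum_erase A f huA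
    have hxnotin : ∀ x ∈ A, x ∉ A.erase u → x = u := by
      intro x hx hx'
      by_contra h
      exact hx' (mem_erase.2 ⟨h, hx⟩)
    by_cases hnbr : ∃ s ∈ A, G.Adj u s
    case neg =>
      -- isolated vertex
      have hiso : ∀ y ∈ A, ¬ G.Adj u y := fun y hy hadj => hnbr ⟨y, hy, hadj⟩
      have hfu : 2 ≤ f u := by
        by_contra h
        by_cases hfu0 : f u = 0
        · rcases hf.1 u huA hfu0 with ⟨z, hz, hadj, _⟩ | ⟨z, hz, _, _, _, hadj, _, _, _⟩ <;>
            exact hiso z hz hadj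
        · have hfu1 : f u = 1 := by omega
          obtain ⟨z, hz, hadj, _⟩ := hf.2.1 u huA hfu1
          exact hiso z hz hadj
      have hvalid' : Valid G f (A.erase u) := hf.subset G hsubA' (by
        intro x hx hx' v hv hadj
        exact absurd ((hxnotin x hx hx') ▸ hadj).symm (hiso v (hsubA' hv)))
      obtain ⟨I', hI'sub, hI'ind, hI'le, hI'bd⟩ := ih (A.erase u) f hcardA'n hvalid'
      have he2 : e2 G A = e2 G (A.erase u) := by
        rw [e2_erase G huA, filter_eq_empty_iff.2 (fun {x} hx => hiso x hx)]
        simp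
      rcases eq_or_lt_of_le hfu with hfu2 | hfu3
      · refine ⟨insert u I', insert_subset huA (hI'sub.trans hsubA'),
          indep_insert G hI'ind u (fun y hy => hiso y (hsubA' (hI'sub hy))), ?_, ?_⟩
        · intro v hv
          rcases mem_insert.1 hv with hv' | hv'
          · rw [hv']; omega
          · exact hI'le v hv'
        · have hcardI : (insert u I').card = I'.card + 1 :=
            card_insert_of_notMem (fun h => huA' (hI'sub h))
          omega
      · exact ⟨I', hI'sub.trans hsubA', hI'ind, hI'le, by omega⟩
    case pos =>
      obtain ⟨s, hsA, hadj⟩ := hnbr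
      have huniq : ∀ x ∈ A, G.Adj u x → x = s := fun x hx hax => hleaf x hx s hsA hax hadj
      have hus : s ≠ u := fun h => G.irrefl (h ▸ hadj)
      have hsA' : s ∈ A.erase u := mem_erase.2 ⟨hus, hsA⟩
      have hdu : (A.filter (G.Adj u)).card = 1 := by
        rw [show A.filter (G.Adj u) = {s} from ?_, card_singleton]
        ext x
        simp only [mem_filter, mem_singleton]
        exact ⟨fun ⟨h1, h2⟩ => huniq x h1 h2, fun h => h ▸ ⟨hsA, hadj⟩⟩
      have he2A : e2 G A = e2 G (A.erase u) + 2 := by rw [e2_erase G huA, hdu]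
      by_cases hfu0 : f u = 0
      · -- Case A : leaf with value 0, support has value 3
        have hfs3 : f s = 3 := by
          rcases hf.1 u huA hfu0 with ⟨z, hz, ha, h3⟩ | ⟨z, hz, z', hz', hne, ha, ha', _, _⟩
          · rwa [huniq z hz ha] at h3
          · exact absurd ((huniq z hz ha).trans (huniq z' hz' ha').symm) hne
        have hvalid' : Valid G f (A.erase u) := hf.subset G hsubA' (by
          intro x hx hx' v hv hadj'
          rw [hxnotin x hx hx']
          omega)
        obtain ⟨I', hI'sub, hI'ind, hI'le, hI'bd⟩ := ih (A.erase u) f hcardA'n hvalid'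
        have hsI' : s ∉ I' := fun h => by have := hI'le s h; omega
        have hins : ∀ y ∈ I', ¬ G.Adj u y := fun y hy hadj' =>
          hsI' ((huniq y (hsubA' (hI'sub hy)) hadj') ▸ hy)
        refine ⟨insert u I', insert_subset huA (hI'sub.trans hsubA'),
          indep_insert G hI'ind u hins, ?_, ?_⟩
        · intro v hv
          rcases mem_insert.1 hv with hv' | hv'
          · rw [hv']; omega
          · exact hI'le v hv'
        · have hcardI : (insert u I').card = I'.card + 1 :=
            card_insert_of_notMem (fun h => huA' (hI'sub h))
          omega
      · by_cases hfu1 : f u = 1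
        · -- Case B : leaf with value 1; bump support to 3
          have hfs2 : 2 ≤ f s := by
            obtain ⟨z, hz, ha, h2⟩ := hf.2.1 u huA hfu1
            rwa [huniq z hz ha] at h2
          have hval1 : Valid G (Function.update f s 3) A := hf.update_three G s
          have hf'u : Function.update f s 3 u = f u := Function.update_of_ne hus.symm 3 f
          have hvalid' : Valid G (Function.update f s 3) (A.erase u) := hval1.subset G hsubA' (by
            intro x hx hx' v hv hadj'
            rw [hxnotin x hx hx', hf'u]
            omega)
          obtain ⟨I', hI'sub, hI'ind, hI'le, hI'bd⟩ := ih (A.erase u) _ hcardA'n hvalid'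
          have hsI' : s ∉ I' := fun h => by
            have := hI'le s h
            rw [Function.update_self] at this
            omega
          have hins : ∀ y ∈ I', ¬ G.Adj u y := fun y hy hadj' =>
            hsI' ((huniq y (hsubA' (hI'sub hy)) hadj') ▸ hy)
          have hsum1 : ∑ v ∈ A.erase u, Function.update f s 3 v
              = 3 + ∑ v ∈ (A.erase u).erase s, f v := by
            rw [sum_update_of_mem hsA', sdiff_singleton_eq_erase]
          have hsum2 : f s + ∑ v ∈ (A.erase u).erase s, f v = ∑ v ∈ A.erase u, f v :=
            add_sum_erase _ f hsA'
          refine ⟨insert u I', insert_subset huA (hI'sub.trans hsubA'),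
            indep_insert G hI'ind u hins, ?_, ?_⟩
          · intro v hv
            rcases mem_insert.1 hv with hv' | hv'
            · rw [hv']; omega
            · have h2 := hI'le v hv'
              have hvs : v ≠ s := fun h => hsI' (h ▸ hv')
              rwa [Function.update_of_ne hvs] at h2
          · have hcardI : (insert u I').card = I'.card + 1 :=
              card_insert_of_notMem (fun h => huA' (hI'sub h))
            omega
        · -- Case C : leaf with value ≥ 2
          have hfu2 : 2 ≤ f u := by omega
          by_cases hfine :
            (2 ≤ f s) ∨
            (f s = 1 ∧ ∃ z ∈ A.erase u, G.Adj s z ∧ 2 ≤ f z) ∨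
            (f s = 0 ∧ ((∃ z ∈ A.erase u, G.Adj s z ∧ f z = 3) ∨
              ∃ z ∈ A.erase u, ∃ z' ∈ A.erase u, z ≠ z' ∧ G.Adj s z ∧ G.Adj s z' ∧
                f z = 2 ∧ f z' = 2))
          · -- c1 : support is fine after deleting u
            have hvalid' : Valid G f (A.erase u) := by
              refine hf.erase_leaf G hsA huniq (fun hs0 => ?_) (fun hs1 => ?_)
              · rcases hfine with h | h | h
                · omega
                · omega
                · exact h.2
              · rcases hfine with h | h | h
                · omega
                · exact h.2
                · omega
            obtain ⟨I', hI'sub, hI'ind, hI'le, hI'bd⟩ := ih (A.erase u) f hcardA'n hvalid'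
            exact ⟨I', hI'sub.trans hsubA', hI'ind, hI'le, by omega⟩
          · have hfsle1 : f s ≤ 1 := by
              by_contra h
              exact hfine (Or.inl (by omega))
            by_cases hfs1 : f s = 1
            · -- c2 : support has value 1, u was its sole witness
              by_cases hfu2' : f u = 2
              · -- bump s to 3, delete u, add u to I
                have hval1 : Valid G (Function.update f s 3) A := hf.update_three G s
                have hvalid' : Valid G (Function.update f s 3) (A.erase u) := by
                  refine hval1.erase_leaf G hsA huniq (fun hs0 => ?_) (fun hs1 => ?_) <;>
                    rw [Function.update_self] at * <;> omega
                obtain ⟨I', hI'sub, hI'ind, hI'le, hI'bd⟩ := ih (A.erase u) _ hcardA'n hvalid'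
                have hsI' : s ∉ I' := fun h => by
                  have := hI'le s h
                  rw [Function.update_self] at this
                  omega
                have hins : ∀ y ∈ I', ¬ G.Adj u y := fun y hy hadj' =>
                  hsI' ((huniq y (hsubA' (hI'sub hy)) hadj') ▸ hy)
                have hsum1 : ∑ v ∈ A.erase u, Function.update f s 3 v
                    = 3 + ∑ v ∈ (A.erase u).erase s, f v := by
                  rw [sum_update_of_mem hsA', sdiff_singleton_eq_erase]
                have hsum2 : f s + ∑ v ∈ (A.erase u).erase s, f v = ∑ v ∈ A.erase u, f v :=
                  add_sum_erase _ f hsA'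
                refine ⟨insert u I', insert_subset huA (hI'sub.trans hsubA'),
                  indep_insert G hI'ind u hins, ?_, ?_⟩
                · intro v hv
                  rcases mem_insert.1 hv with hv' | hv'
                  · rw [hv']; omega
                  · have h2 := hI'le v hv'
                    have hvs : v ≠ s := fun h => hsI' (h ▸ hv')
                    rwa [Function.update_of_ne hvs] at h2
                · have hcardI : (insert u I').card = I'.card + 1 :=
                    card_insert_of_notMem (fun h => huA' (hI'sub h))
                  omega
              · -- f u ≥ 3 : bump s to 2, delete u
                have hfu3 : 3 ≤ f u := by omega
                have hval1 : Valid G (Function.update f s 2) A := hf.update_two G (by omega)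
                have hvalid' : Valid G (Function.update f s 2) (A.erase u) := by
                  refine hval1.erase_leaf G hsA huniq (fun hs0 => ?_) (fun hs1 => ?_) <;>
                    rw [Function.update_self] at * <;> omega
                obtain ⟨I', hI'sub, hI'ind, hI'le, hI'bd⟩ := ih (A.erase u) _ hcardA'n hvalid'
                have hsum1 : ∑ v ∈ A.erase u, Function.update f s 2 v
                    = 2 + ∑ v ∈ (A.erase u).erase s, f v := by
                  rw [sum_update_of_mem hsA', sdiff_singleton_eq_erase]
                have hsum2 : f s + ∑ v ∈ (A.erase u).erase s, f v = ∑ v ∈ A.erase u, f v :=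
                  add_sum_erase _ f hsA'
                refine ⟨I', hI'sub.trans hsubA', hI'ind, ?_, ?_⟩
                · intro v hv
                  have h2 := hI'le v hv
                  by_cases hvs : v = s
                  · rw [hvs]; omega
                  · rwa [Function.update_of_ne hvs] at h2
                · omega
            · -- c3 : support has value 0
              have hfs0 : f s = 0 := by omega
              have hnf3 : ¬ ∃ z ∈ A.erase u, G.Adj s z ∧ f z = 3 := fun h =>
                hfine (Or.inr (Or.inr ⟨hfs0, Or.inl h⟩))
              by_cases hz2 : ∃ z ∈ A.erase u, G.Adj s z ∧ f z = 2
              · -- c3a : s has a 2-valued neighbour besides u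
                obtain ⟨z, hzA', hzadj, hz2v⟩ := hz2
                by_cases hfu2' : f u = 2
                · -- delete u and s, add u to I
                  have hsB : s ∉ (A.erase u).erase s := notMem_erase s _
                  have hsubB : (A.erase u).erase s ⊆ A.erase u := erase_subset s _
                  have hcardB : ((A.erase u).erase s).card + 1 = (A.erase u).card :=
                    card_erase_add_one hsA'
                  have hvalidB : Valid G f ((A.erase u).erase s) :=
                    hf.subset G (hsubB.trans hsubA') (by
                      intro x hx hxB v hv hadj'
                      by_cases hxu : x = u
                      · exfalso
                        have hvs : v = s :=
                          huniq v (hsubA' (hsubB hv)) (hxu ▸ hadj').symm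
                        exact hsB (hvs ▸ hv)
                      · have hxA' : x ∈ A.erase u := mem_erase.2 ⟨hxu, hx⟩
                        have hxs : x = s := by
                          by_contra h
                          exact hxB (mem_erase.2 ⟨h, hxA'⟩)
                        rw [hxs]
                        omega)
                  have hcardBn : ((A.erase u).erase s).card ≤ n := by omega
                  obtain ⟨I', hI'sub, hI'ind, hI'le, hI'bd⟩ :=
                    ih ((A.erase u).erase s) f hcardBn hvalidB
                  have he2B : e2 G (A.erase u)
                      = e2 G ((A.erase u).erase s)
                        + 2 * ((A.erase u).filter (G.Adj s)).card := e2_erase G hsA'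
                  have hk1 : 1 ≤ ((A.erase u).filter (G.Adj s)).card :=
                    card_pos.2 ⟨z, mem_filter.2 ⟨hzA', hzadj⟩⟩
                  have hsumB : f s + ∑ v ∈ (A.erase u).erase s, f v = ∑ v ∈ A.erase u, f v :=
                    add_sum_erase _ f hsA'
                  have hins : ∀ y ∈ I', ¬ G.Adj u y := fun y hy hadj' =>
                    hsB ((huniq y (hsubA' (hsubB (hI'sub hy))) hadj') ▸ hI'sub hy)
                  refine ⟨insert u I', insert_subset huA ((hI'sub.trans hsubB).trans hsubA'),
                    indep_insert G hI'ind u hins, ?_, ?_⟩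
                  · intro v hv
                    rcases mem_insert.1 hv with hv' | hv'
                    · rw [hv']; omega
                    · exact hI'le v hv'
                  · have hcardI : (insert u I').card = I'.card + 1 :=
                      card_insert_of_notMem (fun h => huA' (hsubB (hI'sub h)))
                    omega
                · -- f u ≥ 3 : delete u, bump s to 1 (witness z)
                  have hfu3 : 3 ≤ f u := by omega
                  have hval1 : Valid G (Function.update f s 1) A :=
                    hf.update_one G hfs0 ⟨z, hsubA' hzA', hzadj, by omega⟩
                  have hzs : z ≠ s := fun h => by rw [h] at hz2v; omega
                  have hvalid' : Valid G (Function.update f s 1) (A.erase u) := by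
                    refine hval1.erase_leaf G hsA huniq (fun hs0 => ?_) (fun hs1 => ?_)
                    · rw [Function.update_self] at hs0; omega
                    · exact ⟨z, hzA', hzadj, by rw [Function.update_of_ne hzs]; omega⟩
                  obtain ⟨I', hI'sub, hI'ind, hI'le, hI'bd⟩ := ih (A.erase u) _ hcardA'n hvalid'
                  have hsum1 : ∑ v ∈ A.erase u, Function.update f s 1 v
                      = 1 + ∑ v ∈ (A.erase u).erase s, f v := by
                    rw [sum_update_of_mem hsA', sdiff_singleton_eq_erase]
                  have hsum2 : f s + ∑ v ∈ (A.erase u).erase s, f v = ∑ v ∈ A.erase u, f v :=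
                    add_sum_erase _ f hsA'
                  refine ⟨I', hI'sub.trans hsubA', hI'ind, ?_, ?_⟩
                  · intro v hv
                    have h2 := hI'le v hv
                    by_cases hvs : v = s
                    · rw [hvs]; omega
                    · rwa [Function.update_of_ne hvs] at h2
                  · omega
              · -- c3b : all other neighbours of s have value 1 (or ≥ 4)
                have hfu3 : f u = 3 := by
                  rcases hf.1 s hsA hfs0 with
                    ⟨z, hz, ha, h3⟩ | ⟨z, hz, z', hz', hne, ha, ha', h2, h2'⟩
                  · by_cases hzu : z = u
                    · rw [← hzu]; exact h3
                    · exact absurd ⟨z, mem_erase.2 ⟨hzu, hz⟩, ha, h3⟩ hnf3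
                  · by_cases hzu : z = u
                    · have hz'u : z' ≠ u := fun h => hne (hzu.trans h.symm)
                      exact absurd ⟨z', mem_erase.2 ⟨hz'u, hz'⟩, ha', h2'⟩ hz2
                    · exact absurd ⟨z, mem_erase.2 ⟨hzu, hz⟩, ha, h2⟩ hz2
                have hsB : s ∉ (A.erase u).erase s := notMem_erase s _
                have hsubB : (A.erase u).erase s ⊆ A.erase u := erase_subset s _
                have hcardB : ((A.erase u).erase s).card + 1 = (A.erase u).card :=
                  card_erase_add_one hsA'
                have he2B : e2 G (A.erase u)
                    = e2 G ((A.erase u).erase s)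
                      + 2 * ((A.erase u).filter (G.Adj s)).card := e2_erase G hsA'
                have hsumB : f s + ∑ v ∈ (A.erase u).erase s, f v = ∑ v ∈ A.erase u, f v :=
                  add_sum_erase _ f hsA'
                have hvalidB : Valid G f ((A.erase u).erase s) :=
                  hf.subset G (hsubB.trans hsubA') (by
                    intro x hx hxB v hv hadj'
                    by_cases hxu : x = u
                    · exfalso
                      have hvs : v = s := huniq v (hsubA' (hsubB hv)) (hxu ▸ hadj').symm
                      exact hsB (hvs ▸ hv)
                    · have hxA' : x ∈ A.erase u := mem_erase.2 ⟨hxu, hx⟩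
                      have hxs : x = s := by
                        by_contra h
                        exact hxB (mem_erase.2 ⟨h, hxA'⟩)
                      rw [hxs]
                      omega)
                have hcardBn : ((A.erase u).erase s).card ≤ n := by omega
                rcases Nat.lt_or_ge ((A.erase u).filter (G.Adj s)).card 2 with hklt | hk2
                · rcases Nat.lt_or_ge ((A.erase u).filter (G.Adj s)).card 1 with hk0' | hk1'
                  · -- k = 0 : s has no neighbour besides u; delete u, s; add s to I
                    have hk0 : ((A.erase u).filter (G.Adj s)).card = 0 := by omega
                    obtain ⟨I', hI'sub, hI'ind, hI'le, hI'bd⟩ :=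
                      ih ((A.erase u).erase s) f hcardBn hvalidB
                    have hins : ∀ y ∈ I', ¬ G.Adj s y := by
                      intro y hy hadj'
                      have : y ∈ (A.erase u).filter (G.Adj s) :=
                        mem_filter.2 ⟨hsubB (hI'sub hy), hadj'⟩
                      rw [card_eq_zero.1 hk0] at this
                      exact notMem_empty y this
                    refine ⟨insert s I', insert_subset hsA ((hI'sub.trans hsubB).trans hsubA'),
                      indep_insert G hI'ind s hins, ?_, ?_⟩
                    · intro v hv
                      rcases mem_insert.1 hv with hv' | hv'
                      · rw [hv']; omega
                      · exact hI'le v hv'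
                    · have hcardI : (insert s I').card = I'.card + 1 :=
                        card_insert_of_notMem (fun h => hsB (hI'sub h))
                      omega
                  · -- k = 1 : single extra neighbour t of s
                    have hk1 : ((A.erase u).filter (G.Adj s)).card = 1 := by omega
                    obtain ⟨t, ht⟩ := card_eq_one.1 hk1
                    have htmem : t ∈ (A.erase u).filter (G.Adj s) := by
                      rw [ht]; exact mem_singleton_self t
                    have htA' : t ∈ A.erase u := (mem_filter.1 htmem).1
                    have htadj : G.Adj s t := (mem_filter.1 htmem).2
                    have hts : t ≠ s := fun h => G.irrefl (h ▸ htadj)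
                    have htB : t ∈ (A.erase u).erase s := mem_erase.2 ⟨hts, htA'⟩
                    have htonly : ∀ y ∈ A.erase u, G.Adj s y → y = t := by
                      intro y hy hady
                      have : y ∈ (A.erase u).filter (G.Adj s) := mem_filter.2 ⟨hy, hady⟩
                      rw [ht] at this
                      exact mem_singleton.1 this
                    have htne0 : f t ≠ 0 := hf.2.2 s hsA t (hsubA' htA') htadj hfs0
                    have htne2 : f t ≠ 2 := fun h => hz2 ⟨t, htA', htadj, h⟩
                    have htne3 : f t ≠ 3 := fun h => hnf3 ⟨t, htA', htadj, h⟩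
                    by_cases hft1 : f t = 1
                    · -- delete u, s, t ; add s to I
                      have htC : t ∉ ((A.erase u).erase s).erase t := notMem_erase t _
                      have hsubC : ((A.erase u).erase s).erase t ⊆ (A.erase u).erase s :=
                        erase_subset t _
                      have hcardC : (((A.erase u).erase s).erase t).card + 1
                          = ((A.erase u).erase s).card := card_erase_add_one htB
                      have hsumC : f t + ∑ v ∈ ((A.erase u).erase s).erase t, f v
                          = ∑ v ∈ (A.erase u).erase s, f v := add_sum_erase _ f htB
                      have he2C : e2 G ((A.erase u).erase s)
                          = e2 G (((A.erase u).erase s).erase t)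
                            + 2 * (((A.erase u).erase s).filter (G.Adj t)).card :=
                        e2_erase G htB
                      have hwit : 1 ≤ (((A.erase u).erase s).filter (G.Adj t)).card := by
                        obtain ⟨w, hwA, hwadj, hw2⟩ := hf.2.1 t (hsubA' htA') hft1
                        have hwu : w ≠ u := by
                          rintro rfl
                          have := huniq t (hsubA' htA') hwadj.symm
                          exact hts this
                        have hws : w ≠ s := fun h => by rw [h, hfs0] at hw2; omega
                        exact card_pos.2 ⟨w, mem_filter.2
                          ⟨mem_erase.2 ⟨hws, mem_erase.2 ⟨hwu, hwA⟩⟩, hwadj⟩⟩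
                      have hvalidC : Valid G f (((A.erase u).erase s).erase t) :=
                        hf.subset G ((hsubC.trans hsubB).trans hsubA') (by
                          intro x hx hxC v hv hadj'
                          by_cases hxu : x = u
                          · exfalso
                            have hvs : v = s :=
                              huniq v (hsubA' (hsubB (hsubC hv))) (hxu ▸ hadj').symm
                            exact hsB (hvs ▸ hsubC hv)
                          · have hxA' : x ∈ A.erase u := mem_erase.2 ⟨hxu, hx⟩
                            by_cases hxs : x = s
                            · rw [hxs]; omega
                            · have hxB : x ∈ (A.erase u).erase s := mem_erase.2 ⟨hxs, hxA'⟩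
                              have hxt : x = t := by
                                by_contra h
                                exact hxC (mem_erase.2 ⟨h, hxB⟩)
                              rw [hxt]
                              omega)
                      have hcardCn : (((A.erase u).erase s).erase t).card ≤ n := by omega
                      obtain ⟨I', hI'sub, hI'ind, hI'le, hI'bd⟩ :=
                        ih (((A.erase u).erase s).erase t) f hcardCn hvalidC
                      have hins : ∀ y ∈ I', ¬ G.Adj s y := by
                        intro y hy hadj'
                        have hyt : y = t := htonly y (hsubB (hsubC (hI'sub hy))) hadj'
                        exact htC (hyt ▸ hI'sub hy)
                      refine ⟨insert s I',
                        insert_subset hsA (((hI'sub.trans hsubC).trans hsubB).trans hsubA'),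
                        indep_insert G hI'ind s hins, ?_, ?_⟩
                      · intro v hv
                        rcases mem_insert.1 hv with hv' | hv'
                        · rw [hv']; omega
                        · exact hI'le v hv'
                      · have hcardI : (insert s I').card = I'.card + 1 :=
                          card_insert_of_notMem (fun h => hsB (hsubC (hI'sub h)))
                        omega
                    · -- f t ≥ 4 : delete u, s ; add s to I (t can't be in I')
                      have hft4 : 4 ≤ f t := by omega
                      obtain ⟨I', hI'sub, hI'ind, hI'le, hI'bd⟩ :=
                        ih ((A.erase u).erase s) f hcardBn hvalidB
                      have hins : ∀ y ∈ I', ¬ G.Adj s y := by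
                        intro y hy hadj'
                        have hyt : y = t := htonly y (hsubB (hI'sub hy)) hadj'
                        have := hI'le y hy
                        rw [hyt] at this
                        omega
                      refine ⟨insert s I', insert_subset hsA ((hI'sub.trans hsubB).trans hsubA'),
                        indep_insert G hI'ind s hins, ?_, ?_⟩
                      · intro v hv
                        rcases mem_insert.1 hv with hv' | hv'
                        · rw [hv']; omega
                        · exact hI'le v hv'
                      · have hcardI : (insert s I').card = I'.card + 1 :=
                          card_insert_of_notMem (fun h => hsB (hI'sub h))
                        omega
                · -- k ≥ 2 : delete u, s ; keep I'
                  obtain ⟨I', hI'sub, hI'ind, hI'le, hI'bd⟩ :=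
                    ih ((A.erase u).erase s) f hcardBn hvalidB
                  exact ⟨I', (hI'sub.trans hsubB).trans hsubA', hI'ind, hI'le, by omega⟩

end OIDRAux


theorem stmt13 {V : Type*} [Fintype V] (T : SimpleGraph V) (hT : T.IsTree) :
    2 * coverNum T + 1 ≤ oidRNum T := by
  classical
  have hne : {w | ∃ f : V → ℕ, IsOIDRDF T f ∧ w = ∑ v, f v}.Nonempty := by
    refine ⟨∑ v : V, (fun _ => 3) v, fun _ => 3, ⟨fun v => le_refl 3, fun v h => by simp at h,
      fun v h => by simp at h, fun u v _ h => by simp at h⟩, rfl⟩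
  rw [oidRNum]
  refine le_csInf hne ?_
  rintro w ⟨f, hf, rfl⟩
  have hvalid : OIDRAux.Valid T f univ := by
    refine ⟨?_, ?_, ?_⟩
    · intro v _ hv0
      rcases hf.2.1 v hv0 with ⟨z, hz1, hz2⟩ | ⟨z, z', h1, h2, h3, h4, h5⟩
      · exact Or.inl ⟨z, mem_univ z, hz1, hz2⟩
      · exact Or.inr ⟨z, mem_univ z, z', mem_univ z', h1, h2, h3, h4, h5⟩
    · intro v _ hv1
      obtain ⟨z, h1, h2⟩ := hf.2.2.1 v hv1
      exact ⟨z, mem_univ z, h1, h2⟩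
    · intro x _ y _ h h0
      exact hf.2.2.2 x y h h0
  obtain ⟨I, hIsub, hind, hle, hbd⟩ :=
    OIDRAux.main T hT (Fintype.card V) univ f (by rw [card_univ]) hvalid
  have hcov : ∀ u v, T.Adj u v → u ∈ univ \ I ∨ v ∈ univ \ I := by
    intro u v h
    by_contra hc
    push_neg at hc
    obtain ⟨h1, h2⟩ := hc
    have hu : u ∈ I := by
      by_contra h'
      exact h1 (mem_sdiff.2 ⟨mem_univ u, h'⟩)
    have hv : v ∈ I := by
      by_contra h'
      exact h2 (mem_sdiff.2 ⟨mem_univ v, h'⟩)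
    exact hind u hu v hv h
  have hcover : coverNum T ≤ (univ \ I).card := Nat.sInf_le ⟨univ \ I, rfl, hcov⟩
  have hcardS : (univ \ I).card + I.card = Fintype.card V := by
    rw [card_sdiff_of_subset (subset_univ I), card_univ]
    have := card_le_card (subset_univ I)
    rw [card_univ] at this
    omega
  have he2univ : OIDRAux.e2 T univ + 2 = 2 * Fintype.card V := by
    have h1 : OIDRAux.e2 T univ = ∑ v : V, T.degree v := by
      refine sum_congr rfl fun v _ => ?_
      rw [← neighborFinset_eq_filter]
      rfl
    have h3 := hT.card_edgeFinset
    rw [h1, T.sum_degrees_eq_twice_card_edges]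
    omega
  have hVpos : 1 ≤ Fintype.card V := Fintype.card_pos_iff.2 hT.1.nonempty
  rw [card_univ] at hbd
  omega
end

section
/- For even paths the tree lower bound is attained: γ_oidR(P_{2t}) = 2·β(P_{2t}) + 1 = 2t + 1 for every t ≥ 1. -/
open SimpleGraph Finset

def Ipot (a b : ℕ) : ℕ := if b = 0 then (if a = 3 then 1 else 0) else if b ≤ 2 then 1 else 2

def epsP (g : ℕ → ℕ) (k : ℕ) : ℕ :=
  if (k = 2 ∧ g 0 = 0) ∨ (k = 3 ∧ g 0 = 0 ∧ g 2 = 0) ∨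
     (k = 4 ∧ g 0 = 0 ∧ g 2 = 0 ∧ g 3 = 1) then 1 else 0

lemma epsP_zero (g : ℕ → ℕ) (k : ℕ) (h : 5 ≤ k) : epsP g k = 0 := by
  unfold epsP; split_ifs with h1
  · omega
  · rfl

lemma step_ineq (a b x : ℕ) (ha : a ≤ 3) (hb : b ≤ 3) (hx : x ≤ 3)
    (h0 : b = 0 → x = 3 ∨ a = 3 ∨ (a = 2 ∧ x = 2))
    (h1 : b = 1 → 2 ≤ x ∨ 2 ≤ a) :
    1 + Ipot b x ≤ Ipot a b + x := by
  unfold Ipot; split_ifs <;> omega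

set_option maxHeartbeats 1000000 in
lemma key (n : ℕ) (g : ℕ → ℕ) (hn : n = 2 ∨ 4 ≤ n)
    (hout : ∀ i, n ≤ i → g i = 0)
    (hb : ∀ i, g i ≤ 3)
    (H0 : ∀ i, i < n → g i = 0 → g (i+1) = 3 ∨ g (i-1) = 3 ∨ (g (i-1) = 2 ∧ g (i+1) = 2))
    (H1 : ∀ i, i < n → g i = 1 → 2 ≤ g (i+1) ∨ 2 ≤ g (i-1))
    (H2 : ∀ i, i+1 < n → g i = 0 → g (i+1) ≠ 0) :
    n + 1 ≤ ∑ i ∈ Finset.range n, g i := by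
  have h2n : 2 ≤ n := by omega
  -- the key invariant
  have claim : ∀ k, 2 ≤ k → k ≤ n →
      k + Ipot (g (k-2)) (g (k-1)) ≤ (∑ i ∈ Finset.range k, g i) + epsP g k := by
    intro k hk
    induction k, hk using Nat.le_induction with
    | base =>
      intro _
      have h00 := H0 0 (by omega)
      have h10 := H1 0 (by omega)
      simp only [show (0:ℕ)-1 = 0 from rfl, show (0:ℕ)+1 = 1 from rfl] at h00 h10
      have hb0 := hb 0; have hb1 := hb 1
      rw [Finset.sum_range_succ, Finset.sum_range_succ, Finset.sum_range_zero]
      simp only [show (2:ℕ)-2 = 0 from rfl, show (2:ℕ)-1 = 1 from rfl]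
      unfold Ipot epsP
      norm_num
      split_ifs <;> omega
    | succ k hk IH =>
      intro hk1n
      have IH' := IH (by omega)
      rw [Finset.sum_range_succ]
      have e1 : k+1-2 = k-1 := by omega
      have e2 : k+1-1 = k := by omega
      rw [e1, e2]
      -- constraints at vertex k-1
      have h0k := H0 (k-1) (by omega)
      have h1k := H1 (k-1) (by omega)
      have e3 : k-1+1 = k := by omega
      have e4 : k-1-1 = k-2 := by omega
      rw [e3, e4] at h0k h1k
      have h2k := H2 (k-1) (by omega)
      rw [e3] at h2k
      have hbk2 := hb (k-2); have hbk1 := hb (k-1); have hbk := hb k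
      rcases (by omega : k = 2 ∨ k = 3 ∨ k = 4 ∨ 5 ≤ k) with h|h|h|h
      · subst h
        have h00 := H0 0 (by omega)
        simp only [show (0:ℕ)-1 = 0 from rfl, show (0:ℕ)+1 = 1 from rfl] at h00
        simp only [show (2:ℕ)-2 = 0 from rfl, show (2:ℕ)-1 = 1 from rfl] at IH' h0k h1k h2k ⊢
        rw [Finset.sum_range_succ, Finset.sum_range_succ, Finset.sum_range_zero] at IH' ⊢
        unfold Ipot epsP at IH' ⊢
        norm_num at IH' ⊢
        split_ifs at IH' ⊢ <;> omega
      · subst h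
        have h00 := H0 0 (by omega)
        simp only [show (0:ℕ)-1 = 0 from rfl, show (0:ℕ)+1 = 1 from rfl] at h00
        simp only [show (3:ℕ)-2 = 1 from rfl, show (3:ℕ)-1 = 2 from rfl] at IH' h0k h1k h2k ⊢
        rw [Finset.sum_range_succ, Finset.sum_range_succ, Finset.sum_range_succ,
          Finset.sum_range_zero] at IH' ⊢
        have hb0 := hb 0
        unfold Ipot epsP at IH' ⊢
        norm_num at IH' ⊢
        split_ifs at IH' ⊢ <;> omega
      · subst h
        have h00 := H0 0 (by omega)
        simp only [show (0:ℕ)-1 = 0 from rfl, show (0:ℕ)+1 = 1 from rfl] at h00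
        simp only [show (4:ℕ)-2 = 2 from rfl, show (4:ℕ)-1 = 3 from rfl] at IH' h0k h1k h2k ⊢
        rw [Finset.sum_range_succ, Finset.sum_range_succ, Finset.sum_range_succ,
          Finset.sum_range_succ, Finset.sum_range_zero] at IH' ⊢
        have hb0 := hb 0; have hb1 := hb 1
        unfold Ipot epsP at IH' ⊢
        norm_num at IH' ⊢
        split_ifs at IH' ⊢ <;> omega
      · rw [epsP_zero g k (by omega)] at IH'
        rw [epsP_zero g (k+1) (by omega)]
        have := step_ineq (g (k-2)) (g (k-1)) (g k) (hb _) (hb _) (hb _) h0k h1k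
        omega
  rcases hn with h | h
  · subst h
    have h00 := H0 0 (by omega)
    have h10 := H1 0 (by omega)
    have h01 := H0 1 (by omega)
    have h11 := H1 1 (by omega)
    have hg2 : g 2 = 0 := hout 2 (by omega)
    simp only [show (0:ℕ)-1 = 0 from rfl, show (0:ℕ)+1 = 1 from rfl,
      show (1:ℕ)-1 = 0 from rfl, show (1:ℕ)+1 = 2 from rfl] at h00 h10 h01 h11
    rw [Finset.sum_range_succ, Finset.sum_range_succ, Finset.sum_range_zero]
    omega
  · have hc := claim n (by omega) le_rfl
    have h0n := H0 (n-1) (by omega)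
    have h1n := H1 (n-1) (by omega)
    have e3 : n-1+1 = n := by omega
    have e4 : n-1-1 = n-2 := by omega
    rw [e3, e4] at h0n h1n
    have hgn : g n = 0 := hout n le_rfl
    rcases (by omega : n = 4 ∨ 5 ≤ n) with h4 | h5
    · subst h4
      simp only [show (4:ℕ)-2 = 2 from rfl, show (4:ℕ)-1 = 3 from rfl] at hc h0n h1n
      rw [Finset.sum_range_succ, Finset.sum_range_succ, Finset.sum_range_succ,
        Finset.sum_range_succ, Finset.sum_range_zero] at hc ⊢
      have := hb 0; have := hb 1; have := hb 2; have := hb 3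
      unfold Ipot epsP at hc
      norm_num at hc
      split_ifs at hc <;> omega
    · rw [epsP_zero g n (by omega)] at hc
      have hbn := hb (n-2)
      unfold Ipot at hc
      split_ifs at hc <;> omega

def patF (i : ℕ) : ℕ := if i % 2 = 0 then 0 else if i = 1 then 3 else 2

lemma pat_sum : ∀ t, 1 ≤ t → ∑ i ∈ Finset.range (2*t), patF i = 2*t+1 := by
  intro t ht
  induction t, ht using Nat.le_induction with
  | base =>
    rw [show 2*1 = 2 from rfl, Finset.sum_range_succ, Finset.sum_range_succ,
      Finset.sum_range_zero]
    rfl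
  | succ t ht IH =>
    rw [show 2*(t+1) = (2*t)+1+1 by ring, Finset.sum_range_succ, Finset.sum_range_succ, IH]
    have h1 : patF (2*t) = 0 := by unfold patF; split_ifs <;> omega
    have h2 : patF (2*t+1) = 2 := by unfold patF; split_ifs <;> omega
    rw [h1, h2]

lemma pat_isOIDRDF (t : ℕ) (ht : 1 ≤ t) :
    IsOIDRDF (SimpleGraph.pathGraph (2*t)) (fun v => patF v.val) := by
  refine ⟨?_, ?_, ?_, ?_⟩
  · intro v; simp only [patF]; split_ifs <;> omega
  · intro v hv0
    have hpar : v.val % 2 = 0 := by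
      by_contra h; simp only [patF] at hv0; split_ifs at hv0 <;> omega
    have hvlt := v.2
    rcases (by omega : v.val = 0 ∨ v.val = 2 ∨ 4 ≤ v.val) with h|h|h
    · refine Or.inl ⟨⟨1, by omega⟩, ?_, ?_⟩
      · rw [SimpleGraph.pathGraph_adj]; simp; all_goals omega
      · simp [patF]
    · refine Or.inl ⟨⟨1, by omega⟩, ?_, ?_⟩
      · rw [SimpleGraph.pathGraph_adj]; simp; all_goals omega
      · simp [patF]
    · have hlt : v.val + 1 < 2*t := by omega
      refine Or.inr ⟨⟨v.val-1, by omega⟩, ⟨v.val+1, hlt⟩, ?_, ?_, ?_, ?_, ?_⟩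
      · intro hh; have := congrArg Fin.val hh; simp at this; all_goals omega
      · rw [SimpleGraph.pathGraph_adj]; simp; all_goals omega
      · rw [SimpleGraph.pathGraph_adj]; simp; all_goals omega
      · show patF (v.val - 1) = 2
        unfold patF; split_ifs <;> omega
      · show patF (v.val + 1) = 2
        unfold patF; split_ifs <;> omega
  · intro v hv1
    exfalso; simp only [patF] at hv1; split_ifs at hv1 <;> omega
  · intro u v hadj hu0
    have hpar : u.val % 2 = 0 := by
      by_contra h; simp only [patF] at hu0; split_ifs at hu0 <;> omega
    rw [SimpleGraph.pathGraph_adj] at hadj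
    show patF v.val ≠ 0
    simp only [patF]; split_ifs <;> omega

lemma cover_t (t : ℕ) (ht : 1 ≤ t) : coverNum (SimpleGraph.pathGraph (2*t)) = t := by
  have hmem : t ∈ {k | ∃ S : Finset (Fin (2*t)), S.card = k ∧
      ∀ u v, (SimpleGraph.pathGraph (2*t)).Adj u v → u ∈ S ∨ v ∈ S} := by
    refine ⟨Finset.image (fun i : Fin t => (⟨2*i.val+1, by have := i.2; omega⟩ : Fin (2*t)))
      Finset.univ, ?_, ?_⟩
    · rw [Finset.card_image_of_injective _ ?_, Finset.card_univ, Fintype.card_fin]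
      intro a b hab
      have := congrArg Fin.val hab; simp at this
      exact Fin.ext this
    · have key : ∀ w : Fin (2*t), w.val % 2 = 1 →
          w ∈ Finset.image (fun i : Fin t => (⟨2*i.val+1, by have := i.2; omega⟩ : Fin (2*t)))
            Finset.univ := by
        intro w hw
        rw [Finset.mem_image]
        refine ⟨⟨w.val/2, by have := w.2; omega⟩, Finset.mem_univ _, ?_⟩
        apply Fin.ext; simp; omega
      intro u v huv
      rw [SimpleGraph.pathGraph_adj] at huv
      rcases huv with h | h
      · rcases Nat.even_or_odd u.val with he | ho
        · right; exact key v (by have := Nat.even_iff.mp he; omega)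
        · left; exact key u (Nat.odd_iff.mp ho)
      · rcases Nat.even_or_odd v.val with he | ho
        · left; exact key u (by have := Nat.even_iff.mp he; omega)
        · right; exact key v (Nat.odd_iff.mp ho)
  apply le_antisymm (Nat.sInf_le hmem)
  apply le_csInf ⟨t, hmem⟩
  rintro k ⟨S, rfl, hScov⟩
  set c : Fin t → Fin (2*t) := fun i =>
    if (⟨2*i.val, by have := i.2; omega⟩ : Fin (2*t)) ∈ S then ⟨2*i.val, by have := i.2; omega⟩
    else ⟨2*i.val+1, by have := i.2; omega⟩ with hc
  have hcS : ∀ i, c i ∈ S := by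
    intro i
    rw [hc]; dsimp only; split_ifs with h
    · exact h
    · rcases hScov ⟨2*i.val, by have := i.2; omega⟩ ⟨2*i.val+1, by have := i.2; omega⟩
        (by rw [SimpleGraph.pathGraph_adj]; left; rfl) with h' | h'
      · exact absurd h' h
      · exact h'
  have hcval : ∀ i, (c i).val = 2*i.val ∨ (c i).val = 2*i.val+1 := by
    intro i; rw [hc]; dsimp only; split_ifs <;> simp
  have h2 : t ≤ S.card := by
    have := Finset.card_le_card_of_injOn (s := (Finset.univ : Finset (Fin t))) (t := S) c (fun i _ => hcS i) ?_
    · simpa using this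
    · intro a _ b _ hab
      have ha := hcval a; have hb := hcval b
      have := congrArg Fin.val hab
      apply Fin.ext; omega
  exact h2

lemma oid_lower (t : ℕ) (ht : 1 ≤ t) (f : Fin (2*t) → ℕ)
    (hf : IsOIDRDF (SimpleGraph.pathGraph (2*t)) f) :
    2*t + 1 ≤ ∑ v, f v := by
  obtain ⟨hf3, hf0, hf1, hind⟩ := hf
  set g : ℕ → ℕ := fun i => if h : i < 2*t then f ⟨i, h⟩ else 0 with hgdef
  have hgu : ∀ u : Fin (2*t), g u.val = f u := fun u => dif_pos u.2
  have hout : ∀ i, 2*t ≤ i → g i = 0 := by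
    intro i hi; rw [hgdef]; exact dif_neg (by omega)
  have hb : ∀ i, g i ≤ 3 := by
    intro i; rw [hgdef]; dsimp only; split_ifs with h
    · exact hf3 _
    · omega
  have H0 : ∀ i, i < 2*t → g i = 0 →
      g (i+1) = 3 ∨ g (i-1) = 3 ∨ (g (i-1) = 2 ∧ g (i+1) = 2) := by
    intro i hi h0
    have h0' : f ⟨i, hi⟩ = 0 := by rw [← hgu ⟨i, hi⟩]; exact h0
    rcases hf0 ⟨i, hi⟩ h0' with ⟨u, hadj, hu3⟩ | ⟨u, w, huw, hau, haw, hu2, hw2⟩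
    · rw [SimpleGraph.pathGraph_adj] at hadj
      simp only [] at hadj
      rcases hadj with h1 | h1
      · left; rw [show i+1 = u.val from h1, hgu]; exact hu3
      · right; left; rw [show i-1 = u.val by omega, hgu]; exact hu3
    · rw [SimpleGraph.pathGraph_adj] at hau
      rw [SimpleGraph.pathGraph_adj] at haw
      simp only [] at hau haw
      rcases hau with h1 | h1 <;> rcases haw with h2 | h2
      · exact absurd (Fin.ext (by omega : u.val = w.val)) huw
      · refine Or.inr (Or.inr ⟨?_, ?_⟩)
        · rw [show i-1 = w.val by omega, hgu]; exact hw2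
        · rw [show i+1 = u.val from h1, hgu]; exact hu2
      · refine Or.inr (Or.inr ⟨?_, ?_⟩)
        · rw [show i-1 = u.val by omega, hgu]; exact hu2
        · rw [show i+1 = w.val from h2, hgu]; exact hw2
      · exact absurd (Fin.ext (by omega : u.val = w.val)) huw
  have H1 : ∀ i, i < 2*t → g i = 1 → 2 ≤ g (i+1) ∨ 2 ≤ g (i-1) := by
    intro i hi h1
    have h1' : f ⟨i, hi⟩ = 1 := by rw [← hgu ⟨i, hi⟩]; exact h1
    obtain ⟨u, hadj, hu2⟩ := hf1 ⟨i, hi⟩ h1'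
    rw [SimpleGraph.pathGraph_adj] at hadj
    simp only [] at hadj
    rcases hadj with h | h
    · left; rw [show i+1 = u.val from h, hgu]; exact hu2
    · right; rw [show i-1 = u.val by omega, hgu]; exact hu2
  have H2 : ∀ i, i+1 < 2*t → g i = 0 → g (i+1) ≠ 0 := by
    intro i hi h0
    have h0' : f ⟨i, by omega⟩ = 0 := by rw [← hgu ⟨i, by omega⟩]; exact h0
    have hadj : (SimpleGraph.pathGraph (2*t)).Adj ⟨i, by omega⟩ ⟨i+1, hi⟩ := by
      rw [SimpleGraph.pathGraph_adj]; left; rfl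
    have := hind _ _ hadj h0'
    rw [← hgu ⟨i+1, hi⟩] at this; exact this
  have hkey := key (2*t) g (by omega) hout hb H0 H1 H2
  have hsum : ∑ v, f v = ∑ i ∈ Finset.range (2*t), g i := by
    rw [← Fin.sum_univ_eq_sum_range g (2*t)]
    exact Finset.sum_congr rfl (fun v _ => (hgu v).symm)
  omega


theorem stmt14 (t : ℕ) (ht : 1 ≤ t) :
    oidRNum (SimpleGraph.pathGraph (2 * t)) = 2 * coverNum (SimpleGraph.pathGraph (2 * t)) + 1 ∧
    oidRNum (SimpleGraph.pathGraph (2 * t)) = 2 * t + 1 := by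
  have hcov := cover_t t ht
  have hmem : (2*t+1) ∈ {w | ∃ f : Fin (2*t) → ℕ,
      IsOIDRDF (SimpleGraph.pathGraph (2*t)) f ∧ w = ∑ v, f v} :=
    ⟨fun v => patF v.val, pat_isOIDRDF t ht,
      ((Fin.sum_univ_eq_sum_range patF (2*t)).trans (pat_sum t ht)).symm⟩
  have hoid : oidRNum (SimpleGraph.pathGraph (2*t)) = 2*t+1 := by
    apply le_antisymm (Nat.sInf_le hmem)
    apply le_csInf ⟨_, hmem⟩
    rintro w ⟨f, hf, rfl⟩
    exact oid_lower t ht f hf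
  exact ⟨by rw [hoid, hcov], hoid⟩
end
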